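/- arXiv:2311.02920 — 10 statements merged into one kernel-verified Lean document; each statement's English description precedes it below -/
import Mathlib

section
/- Let 0 < p ≤ 1, let X be a finite-dimensional p-Banach space with X ≠ {0}, and let Z ⊆ B_X be a symmetric set whose p-convex hull equals the closed unit ball B_X. Then for every x ∈ X, the p-norm of x equals the minimum over all algebraic bases b of X consisting of points of Z, and all coefficient representations x = sum_{v ∈ b} a_v v, of (sum_{v ∈ b} |a_v|^p)^{1/p}; moreover this minimum is attained. -/
/-- A set `A` is `p`-convex if `λ•x + μ•y ∈ A` whenever `x, y ∈ A`,
`λ, μ ≥ 0` and `λ^p + μ^p = 1`. -/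
def PConvex (p : ℝ) {X : Type*} [AddCommGroup X] [Module ℝ X] (A : Set X) : Prop :=
  ∀ x ∈ A, ∀ y ∈ A, ∀ l m : ℝ, 0 ≤ l → 0 ≤ m → l ^ p + m ^ p = 1 → l • x + m • y ∈ A

/-- The `p`-convex hull: the smallest `p`-convex set containing `Z`. -/
def pConvexHull (p : ℝ) {X : Type*} [AddCommGroup X] [Module ℝ X] (Z : Set X) : Set X :=
  ⋂₀ {A | Z ⊆ A ∧ PConvex p A}

private lemma ptri_sum (p : ℝ) (hp0 : 0 < p) {X : Type*} [AddCommGroup X] [Module ℝ X]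
    (N : X → ℝ) (hN0 : N 0 = 0)
    (hNtri : ∀ x y : X, N (x + y) ^ p ≤ N x ^ p + N y ^ p)
    {ι : Type*} (s : Finset ι) (f : ι → X) :
    N (∑ i ∈ s, f i) ^ p ≤ ∑ i ∈ s, N (f i) ^ p := by
  classical
  induction s using Finset.cons_induction with
  | empty => simp [hN0, Real.zero_rpow hp0.ne']
  | cons a s ha ih =>
      rw [Finset.sum_cons, Finset.sum_cons]
      exact le_trans (hNtri _ _) (by linarith)

private lemma rpow_cc (p : ℝ) (hp0 : 0 < p) (hp1 : p ≤ 1)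
    {u v θ : ℝ} (hu : 0 ≤ u) (hv : 0 ≤ v) (hθ0 : 0 ≤ θ) (hθ1 : θ ≤ 1) :
    θ * u ^ p + (1 - θ) * v ^ p ≤ (θ * u + (1 - θ) * v) ^ p := by
  have hb0 : (0:ℝ) ≤ 1 - θ := by linarith
  have hab : θ + (1 - θ) = 1 := by ring
  have h := (Real.concaveOn_rpow hp0.le hp1).2 (Set.mem_Ici.2 hu) (Set.mem_Ici.2 hv)
    hθ0 hb0 hab
  simpa [smul_eq_mul] using h

private lemma perturb_pos (p : ℝ) (hp0 : 0 < p) (hp1 : p ≤ 1) {n : ℕ}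
    (a c : Fin n → ℝ) (ha : ∀ i, 0 ≤ a i) (hc : ∃ j, 0 < c j) :
    ∃ t : ℝ, (∃ j, a j + t * c j = 0) ∧ (∀ i, 0 ≤ a i + t * c i) ∧
      ∑ i, (a i + t * c i) ^ p ≤ ∑ i, (a i) ^ p := by
  classical
  set P : Finset (Fin n) := Finset.univ.filter (fun i => 0 < c i) with hP
  have hPne : P.Nonempty := by
    obtain ⟨j, hj⟩ := hc
    exact ⟨j, by simp [hP, hj]⟩
  obtain ⟨j₀, hj₀P, hj₀⟩ := Finset.exists_mem_eq_inf' hPne (fun i => a i / c i)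
  set m : ℝ := P.inf' hPne (fun i => a i / c i) with hm
  have hm0 : 0 ≤ m := by
    apply Finset.le_inf'
    intro i hi
    have hci : 0 < c i := (Finset.mem_filter.1 hi).2
    exact div_nonneg (ha i) hci.le
  have hcj₀ : 0 < c j₀ := (Finset.mem_filter.1 hj₀P).2
  have hzeroA : a j₀ + (-m) * c j₀ = 0 := by
    have hne : c j₀ ≠ 0 := hcj₀.ne'
    rw [hj₀]; field_simp; ring
  have hfeasA : ∀ i, 0 ≤ a i + (-m) * c i := by
    intro i
    by_cases hci : 0 < c i
    · have hiP : i ∈ P := by simp [hP, hci]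
      have h1 : m ≤ a i / c i := Finset.inf'_le (fun i => a i / c i) hiP
      have h2 : m * c i ≤ a i := (le_div_iff₀ hci).1 h1
      linarith
    · push_neg at hci
      nlinarith [ha i, mul_nonneg hm0 (neg_nonneg.2 hci)]
  by_cases hneg : ∃ i, c i < 0
  · -- mixed case
    set Q : Finset (Fin n) := Finset.univ.filter (fun i => c i < 0) with hQ
    have hQne : Q.Nonempty := by
      obtain ⟨j, hj⟩ := hneg
      exact ⟨j, by simp [hQ, hj]⟩
    obtain ⟨j₁, hj₁Q, hj₁⟩ := Finset.exists_mem_eq_inf' hQne (fun i => a i / (-c i))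
    set M : ℝ := Q.inf' hQne (fun i => a i / (-c i)) with hM
    have hM0 : 0 ≤ M := by
      apply Finset.le_inf'
      intro i hi
      have hci : c i < 0 := (Finset.mem_filter.1 hi).2
      exact div_nonneg (ha i) (by linarith)
    have hcj₁ : c j₁ < 0 := (Finset.mem_filter.1 hj₁Q).2
    have hzeroB : a j₁ + M * c j₁ = 0 := by
      rw [hj₁]
      have hne : c j₁ ≠ 0 := hcj₁.ne
      rw [div_neg, neg_mul, div_mul_cancel₀ _ hne]
      ring
    have hfeasB : ∀ i, 0 ≤ a i + M * c i := by
      intro i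
      by_cases hci : c i < 0
      · have hiQ : i ∈ Q := by simp [hQ, hci]
        have h1 : M ≤ a i / (-c i) := Finset.inf'_le (fun i => a i / (-c i)) hiQ
        have h2 : 0 < -c i := by linarith
        have h3 : M * (-c i) ≤ a i := (le_div_iff₀ h2).1 h1
        linarith
      · push_neg at hci
        nlinarith [ha i, mul_nonneg hM0 hci]
    have hsum : min (∑ i, (a i + (-m) * c i) ^ p) (∑ i, (a i + M * c i) ^ p)
        ≤ ∑ i, (a i) ^ p := by
      by_cases hMm' : M + m = 0
      · have hmz : m = 0 := by linarith
        have he : ∀ i, a i + (-m) * c i = a i := by intro i; rw [hmz]; ring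
        refine le_trans (min_le_left _ _) ?_
        simp only [he]
        exact le_rfl
      · have hMm : 0 < M + m := by
          rcases lt_or_eq_of_le (by linarith : (0:ℝ) ≤ M + m) with h | h
          · exact h
          · exact absurd h.symm hMm'
        set θ : ℝ := M / (M + m) with hθ
        have hθ0 : 0 ≤ θ := div_nonneg hM0 hMm.le
        have hθ1 : θ ≤ 1 := (div_le_one hMm).2 (by linarith)
        have key : ∀ i, θ * (a i + (-m) * c i) ^ p + (1 - θ) * (a i + M * c i) ^ p
            ≤ (a i) ^ p := by
          intro i
          have h := rpow_cc p hp0 hp1 (hfeasA i) (hfeasB i) hθ0 hθ1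
          have harg : θ * (a i + (-m) * c i) + (1 - θ) * (a i + M * c i) = a i := by
            rw [hθ]; field_simp; ring
          rwa [harg] at h
        calc min (∑ i, (a i + (-m) * c i) ^ p) (∑ i, (a i + M * c i) ^ p)
            ≤ θ * (∑ i, (a i + (-m) * c i) ^ p) + (1 - θ) * (∑ i, (a i + M * c i) ^ p) := by
              nlinarith [min_le_left (∑ i, (a i + (-m) * c i) ^ p) (∑ i, (a i + M * c i) ^ p),
                min_le_right (∑ i, (a i + (-m) * c i) ^ p) (∑ i, (a i + M * c i) ^ p)]
          _ ≤ ∑ i, (a i) ^ p := by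
              rw [Finset.mul_sum, Finset.mul_sum, ← Finset.sum_add_distrib]
              exact Finset.sum_le_sum (fun i _ => key i)
    rcases le_total (∑ i, (a i + (-m) * c i) ^ p) (∑ i, (a i + M * c i) ^ p) with h | h
    · exact ⟨-m, ⟨j₀, hzeroA⟩, hfeasA, by rw [min_eq_left h] at hsum; exact hsum⟩
    · exact ⟨M, ⟨j₁, hzeroB⟩, hfeasB, by rw [min_eq_right h] at hsum; exact hsum⟩
  · -- all c i ≥ 0 : termwise
    push_neg at hneg
    refine ⟨-m, ⟨j₀, hzeroA⟩, hfeasA, Finset.sum_le_sum (fun i _ => ?_)⟩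
    apply Real.rpow_le_rpow (hfeasA i) _ hp0.le
    nlinarith [mul_nonneg hm0 (hneg i)]

private lemma perturb (p : ℝ) (hp0 : 0 < p) (hp1 : p ≤ 1) {n : ℕ}
    (a c : Fin n → ℝ) (ha : ∀ i, 0 ≤ a i) (hc : ∃ j, c j ≠ 0) :
    ∃ t : ℝ, (∃ j, a j + t * c j = 0) ∧ (∀ i, 0 ≤ a i + t * c i) ∧
      ∑ i, (a i + t * c i) ^ p ≤ ∑ i, (a i) ^ p := by
  by_cases hpos : ∃ j, 0 < c j
  · exact perturb_pos p hp0 hp1 a c ha hpos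
  · push_neg at hpos
    obtain ⟨j, hj⟩ := hc
    have hcj : c j < 0 := lt_of_le_of_ne (hpos j) hj
    have hex : ∃ j, 0 < -c j := ⟨j, by linarith⟩
    obtain ⟨t, ⟨j', hj'⟩, hfeas, hsum⟩ := perturb_pos p hp0 hp1 a (fun i => -c i) ha hex
    exact ⟨-t, ⟨j', by linarith [hj']⟩, fun i => by simpa [neg_mul, mul_neg] using hfeas i,
      by simpa [neg_mul, mul_neg] using hsum⟩

private lemma reduce (p : ℝ) (hp0 : 0 < p) (hp1 : p ≤ 1)
    {X : Type*} [AddCommGroup X] [Module ℝ X] (Z : Set X) :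
    ∀ n : ℕ, ∀ z : Fin n → X, ∀ a : Fin n → ℝ, (∀ i, z i ∈ Z) → (∀ i, 0 ≤ a i) →
    ∃ t : Finset X, (t : Set X) ⊆ Z ∧
      LinearIndependent ℝ (fun v : ((t : Set X) : Type _) => (v : X)) ∧
      ∃ b : X → ℝ, ∑ v ∈ t, b v • v = ∑ i, a i • z i ∧
        ∑ v ∈ t, |b v| ^ p ≤ ∑ i, (a i) ^ p := by
  classical
  intro n
  induction n with
  | zero =>
      intro z a _ _
      refine ⟨∅, by simp, ?_, 0, by simp, by simp⟩
      haveI : IsEmpty (((∅ : Finset X) : Set X) : Type _) :=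
        Set.isEmpty_coe_sort.2 (by simp)
      exact linearIndependent_empty_type
  | succ n ih =>
      intro z a hz ha
      by_cases hli : LinearIndependent ℝ z
      · have hinj : Function.Injective z := hli.injective
        refine ⟨Finset.image z Finset.univ, ?_, ?_, ?_⟩
        · intro v hv
          simp only [Finset.coe_image, Finset.coe_univ, Set.image_univ] at hv
          obtain ⟨i, rfl⟩ := hv
          exact hz i
        · have hco : ((Finset.image z Finset.univ : Finset X) : Set X) = Set.range z := by
            simp
          rw [hco]
          exact (linearIndepOn_id_range_iff hinj).2 hli
        · refine ⟨fun v => if h : ∃ i, z i = v then a h.choose else 0, ?_, ?_⟩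
          · rw [Finset.sum_image (fun i _ j _ h => hinj h)]
            refine Finset.sum_congr rfl fun i _ => ?_
            show (if h : ∃ k, z k = z i then a h.choose else 0) • z i = a i • z i
            have h : ∃ k, z k = z i := ⟨i, rfl⟩
            rw [dif_pos h, hinj h.choose_spec]
          · rw [Finset.sum_image (fun i _ j _ h => hinj h)]
            apply le_of_eq
            refine Finset.sum_congr rfl fun i _ => ?_
            show |if h : ∃ k, z k = z i then a h.choose else 0| ^ p = a i ^ p
            have h : ∃ k, z k = z i := ⟨i, rfl⟩
            rw [dif_pos h, hinj h.choose_spec, abs_of_nonneg (ha i)]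
      · rw [Fintype.not_linearIndependent_iff] at hli
        obtain ⟨c, hc0, hcne⟩ := hli
        obtain ⟨t, ⟨j, hj⟩, hfeas, hsum⟩ := perturb p hp0 hp1 a c ha hcne
        set a' : Fin (n+1) → ℝ := fun i => a i + t * c i with ha'
        have hj' : a' j = 0 := hj
        have hrepr : ∑ i, a' i • z i = ∑ i, a i • z i := by
          have h1 : ∑ i, a' i • z i = ∑ i, a i • z i + t • ∑ i, c i • z i := by
            rw [Finset.smul_sum, ← Finset.sum_add_distrib]
            apply Finset.sum_congr rfl
            intro i _
            rw [smul_smul, ← add_smul]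
          rw [h1, hc0, smul_zero, add_zero]
        obtain ⟨tt, httZ, httind, b, hb1, hb2⟩ :=
          ih (fun k => z (j.succAbove k)) (fun k => a' (j.succAbove k))
            (fun k => hz _) (fun k => hfeas _)
        refine ⟨tt, httZ, httind, b, ?_, ?_⟩
        · rw [hb1, ← hrepr, Fin.sum_univ_succAbove (fun i => a' i • z i) j, hj']
          simp
        · refine le_trans hb2 (le_trans (le_of_eq ?_) hsum)
          rw [Fin.sum_univ_succAbove (fun i => (a' i) ^ p) j, hj',
            Real.zero_rpow hp0.ne', zero_add]

private lemma hull_subset_comb (p : ℝ) (hp0 : 0 < p)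
    {X : Type*} [AddCommGroup X] [Module ℝ X] (Z : Set X) :
    pConvexHull p Z ⊆ {x | ∃ n : ℕ, ∃ z : Fin n → X, ∃ l : Fin n → ℝ,
      (∀ i, z i ∈ Z) ∧ (∀ i, 0 ≤ l i) ∧ ∑ i, (l i) ^ p = 1 ∧ x = ∑ i, l i • z i} := by
  apply Set.sInter_subset_of_mem
  constructor
  · intro v hv
    exact ⟨1, fun _ => v, fun _ => 1, fun _ => hv, fun _ => zero_le_one,
      by simp [Real.one_rpow], by simp⟩
  · rintro x ⟨n, z, l, hzZ, hl0, hl1, rfl⟩ y ⟨m', w, μ, hwZ, hμ0, hμ1, rfl⟩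
      lc mc hlc hmc hlm
    refine ⟨n + m', Fin.append z w,
      Fin.append (fun i => lc * l i) (fun j => mc * μ j), ?_, ?_, ?_, ?_⟩
    · intro k
      refine Fin.addCases (fun i => ?_) (fun i => ?_) k
      · simpa using hzZ i
      · simpa using hwZ i
    · intro k
      refine Fin.addCases (fun i => ?_) (fun i => ?_) k
      · simpa using mul_nonneg hlc (hl0 i)
      · simpa using mul_nonneg hmc (hμ0 i)
    · rw [Fin.sum_univ_add]
      simp only [Fin.append_left, Fin.append_right]
      have e1 : ∀ i : Fin n, (lc * l i) ^ p = lc ^ p * (l i) ^ p := fun i =>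
        Real.mul_rpow hlc (hl0 i)
      have e2 : ∀ i : Fin m', (mc * μ i) ^ p = mc ^ p * (μ i) ^ p := fun i =>
        Real.mul_rpow hmc (hμ0 i)
      simp only [e1, e2, ← Finset.mul_sum, hl1, hμ1, mul_one]
      exact hlm
    · rw [Fin.sum_univ_add]
      simp only [Fin.append_left, Fin.append_right]
      rw [Finset.smul_sum, Finset.smul_sum]
      congr 1 <;> apply Finset.sum_congr rfl <;> intro i _ <;> rw [smul_smul]

/-- if `X ≠ {0}` is a finite-dimensional `p`-Banach space (with
`p`-norm `N`) and `Z ⊆ B_X` is symmetric with `p`-convex hull equal to `B_X`,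
then for every `x`, `N x` is the minimum (attained) of
`(∑_{v ∈ b} |a_v|^p)^{1/p}` over all algebraic bases `b ⊆ Z` of `X` and all
representations `x = ∑_{v ∈ b} a_v v`. -/
theorem stmt_3 (p : ℝ) (hp0 : 0 < p) (hp1 : p ≤ 1)
    {X : Type*} [AddCommGroup X] [Module ℝ X] [FiniteDimensional ℝ X] [Nontrivial X]
    (N : X → ℝ)
    (hNnn : ∀ x, 0 ≤ N x) (hNeq : ∀ x, N x = 0 ↔ x = 0)
    (hNhom : ∀ (t : ℝ) (x : X), N (t • x) = |t| * N x)
    (hNtri : ∀ x y : X, N (x + y) ^ p ≤ N x ^ p + N y ^ p)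
    (Z : Set X) (hZB : Z ⊆ {x | N x ≤ 1}) (hZsym : Z = -Z)
    (hZhull : pConvexHull p Z = {x | N x ≤ 1}) :
    ∀ x : X, IsLeast {r : ℝ | ∃ s : Finset X, (s : Set X) ⊆ Z ∧
        LinearIndependent ℝ (fun v : ((s : Set X) : Type _) => (v : X)) ∧
        Submodule.span ℝ (s : Set X) = ⊤ ∧
        ∃ a : X → ℝ, x = ∑ v ∈ s, a v • v ∧
          r = (∑ v ∈ s, |a v| ^ p) ^ (1 / p)} (N x) := by
    classical
  have hN0 : N 0 = 0 := (hNeq 0).mpr rfl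
  have key : ∀ {u : ℝ}, 0 ≤ u → (u ^ p) ^ (1/p) = u := by
    intro u hu
    rw [← Real.rpow_mul hu, mul_one_div, div_self hp0.ne', Real.rpow_one]
  have hspanP : PConvex p ((Submodule.span ℝ Z : Submodule ℝ X) : Set X) := by
    intro a ha b hb l m _ _ _
    exact Submodule.add_mem _ (Submodule.smul_mem _ _ ha) (Submodule.smul_mem _ _ hb)
  have hballspan : {x | N x ≤ 1} ⊆ ((Submodule.span ℝ Z : Submodule ℝ X) : Set X) := by
    rw [← hZhull]
    exact Set.sInter_subset_of_mem ⟨Submodule.subset_span, hspanP⟩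
  have hspanZ : Submodule.span ℝ Z = ⊤ := by
    rw [eq_top_iff]
    intro y _
    by_cases hy : y = 0
    · subst hy; exact Submodule.zero_mem _
    · have hNy : 0 < N y := lt_of_le_of_ne (hNnn y) (fun h => hy ((hNeq y).1 h.symm))
      have hu : N ((N y)⁻¹ • y) ≤ 1 := by
        rw [hNhom, abs_of_pos (inv_pos.2 hNy), inv_mul_cancel₀ hNy.ne']
      have hmem := hballspan hu
      have hyy : y = (N y) • ((N y)⁻¹ • y) := by
        rw [smul_smul, mul_inv_cancel₀ hNy.ne', one_smul]
      rw [hyy]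
      exact Submodule.smul_mem _ _ hmem
  intro x
  have lb : ∀ r ∈ {r : ℝ | ∃ s : Finset X, (s : Set X) ⊆ Z ∧
      LinearIndependent ℝ (fun v : ((s : Set X) : Type _) => (v : X)) ∧
      Submodule.span ℝ (s : Set X) = ⊤ ∧
      ∃ a : X → ℝ, x = ∑ v ∈ s, a v • v ∧
        r = (∑ v ∈ s, |a v| ^ p) ^ (1 / p)}, N x ≤ r := by
    rintro r ⟨s, hsZ, -, -, a, hxa, rfl⟩
    have h1 : N x ^ p ≤ ∑ v ∈ s, |a v| ^ p := by
      have h2 := ptri_sum p hp0 N hN0 hNtri s (fun v => a v • v)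
      rw [← hxa] at h2
      refine le_trans h2 (Finset.sum_le_sum fun v hv => ?_)
      rw [hNhom, Real.mul_rpow (abs_nonneg _) (hNnn v)]
      have h3 : N v ^ p ≤ 1 := by
        have := Real.rpow_le_rpow (hNnn v) (hZB (hsZ hv)) hp0.le
        rwa [Real.one_rpow] at this
      nlinarith [Real.rpow_nonneg (abs_nonneg (a v)) p]
    calc N x = (N x ^ p) ^ (1/p) := (key (hNnn x)).symm
      _ ≤ (∑ v ∈ s, |a v| ^ p) ^ (1/p) :=
        Real.rpow_le_rpow (Real.rpow_nonneg (hNnn x) p) h1 (by positivity)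
  have mem : ∃ t : Finset X, (t : Set X) ⊆ Z ∧
      LinearIndependent ℝ (fun v : ((t : Set X) : Type _) => (v : X)) ∧
      ∃ b : X → ℝ, x = ∑ v ∈ t, b v • v ∧ ∑ v ∈ t, |b v| ^ p ≤ N x ^ p := by
    by_cases hx : x = 0
    · refine ⟨∅, by simp, ?_, 0, by simp [hx], by
        simp [hx, hN0, Real.zero_rpow hp0.ne']⟩
      haveI : IsEmpty (((∅ : Finset X) : Set X) : Type _) :=
        Set.isEmpty_coe_sort.2 (by simp)
      exact linearIndependent_empty_type
    · have hNx : 0 < N x := lt_of_le_of_ne (hNnn x) (fun h => hx ((hNeq x).1 h.symm))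
      have hu : N ((N x)⁻¹ • x) ≤ 1 := by
        rw [hNhom, abs_of_pos (inv_pos.2 hNx), inv_mul_cancel₀ hNx.ne']
      have hmemh : (N x)⁻¹ • x ∈ pConvexHull p Z := by rw [hZhull]; exact hu
      obtain ⟨n, z, l, hzZ, hl0, hl1, hul⟩ := hull_subset_comb p hp0 Z hmemh
      have hx' : x = ∑ i, (N x * l i) • z i := by
        have h4 : ∑ i, (N x * l i) • z i = N x • ∑ i, l i • z i := by
          rw [Finset.smul_sum]
          exact Finset.sum_congr rfl fun i _ => (smul_smul _ _ _).symm
        rw [h4, ← hul, smul_smul, mul_inv_cancel₀ hNx.ne', one_smul]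
      have hsum : ∑ i, (N x * l i) ^ p = N x ^ p := by
        have he : ∀ i, (N x * l i) ^ p = N x ^ p * (l i) ^ p := fun i =>
          Real.mul_rpow (hNnn x) (hl0 i)
        simp only [he, ← Finset.mul_sum, hl1, mul_one]
      obtain ⟨t, htZ, htind, b, hb1, hb2⟩ := reduce p hp0 hp1 Z n z
        (fun i => N x * l i) hzZ (fun i => mul_nonneg (hNnn x) (hl0 i))
      exact ⟨t, htZ, htind, b, hx'.trans hb1.symm, hsum ▸ hb2⟩
  obtain ⟨t, htZ, htind, b, hxb, hble⟩ := mem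
  obtain ⟨B, hBZ, htB, hZspB, hBind⟩ := exists_linearIndepOn_id_extension htind htZ
  have hBfin : B.Finite := LinearIndependent.setFinite hBind
  have hspanB : Submodule.span ℝ B = ⊤ := by
    rw [eq_top_iff, ← hspanZ]
    exact Submodule.span_le.2 hZspB
  set s : Finset X := hBfin.toFinset with hs
  have hscoe : (s : Set X) = B := hBfin.coe_toFinset
  have htsub : t ⊆ s := by
    intro v hv
    have : v ∈ B := htB hv
    rwa [← hscoe] at this
  set aa : X → ℝ := fun v => if v ∈ t then b v else 0 with haa
  have hsum1 : ∑ v ∈ s, aa v • v = ∑ v ∈ t, b v • v := by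
    rw [← Finset.sum_subset htsub (fun v _ hvt => by simp [haa, hvt])]
    exact Finset.sum_congr rfl fun v hv => by simp [haa, hv]
  have hsum2 : ∑ v ∈ s, |aa v| ^ p = ∑ v ∈ t, |b v| ^ p := by
    rw [← Finset.sum_subset htsub
      (fun v _ hvt => by simp [haa, hvt, Real.zero_rpow hp0.ne'])]
    exact Finset.sum_congr rfl fun v hv => by simp [haa, hv]
  have hsind : LinearIndependent ℝ (fun v : ((s : Set X) : Type _) => (v : X)) := by
    rw [hscoe]; exact hBind
  have hsspan : Submodule.span ℝ (s : Set X) = ⊤ := by rw [hscoe]; exact hspanB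
  have hsZ : (s : Set X) ⊆ Z := hscoe ▸ hBZ
  have hrmem : (∑ v ∈ s, |aa v| ^ p) ^ (1/p) ∈ {r : ℝ | ∃ s : Finset X, (s : Set X) ⊆ Z ∧
      LinearIndependent ℝ (fun v : ((s : Set X) : Type _) => (v : X)) ∧
      Submodule.span ℝ (s : Set X) = ⊤ ∧
      ∃ a : X → ℝ, x = ∑ v ∈ s, a v • v ∧
        r = (∑ v ∈ s, |a v| ^ p) ^ (1 / p)} :=
    ⟨s, hsZ, hsind, hsspan, aa, by rw [hsum1, ← hxb], rfl⟩
  have hrle : (∑ v ∈ s, |aa v| ^ p) ^ (1/p) ≤ N x := by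
    rw [hsum2]
    calc (∑ v ∈ t, |b v| ^ p) ^ (1/p) ≤ (N x ^ p) ^ (1/p) :=
      Real.rpow_le_rpow (Finset.sum_nonneg fun v _ =>
        Real.rpow_nonneg (abs_nonneg _) p) hble (by positivity)
      _ = N x := key (hNnn x)
  have heq : (∑ v ∈ s, |aa v| ^ p) ^ (1/p) = N x :=
    le_antisymm hrle (lb _ hrmem)
  exact ⟨heq ▸ hrmem, lb⟩
end

section
/- Let (M, d, 0) be a pointed metric space with M = {0, x, y} and let p ∈ (0,1]. Setting d_x = d(x,0), d_y = d(y,0), d_{xy} = d(x,y), define for a, b ∈ ℝ the quantity N(a,b) := min{|a d_x|^p + |b d_y|^p, |(a+b) d_x|^p + |b d_{xy}|^p, |(a+b) d_y|^p + |a d_{xy}|^p}. Then N(a,b)^{1/p} defines a p-norm on ℝ² (identifying (a,b) with a·δ(x) + b·δ(y)), i.e., it is absolutely homogeneous, vanishes only at 0, and satisfies the p-triangle inequality. -/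
open Real

/-- Cost of the 3-edge representation with flow parameter `w`, written in terms of
"kink" locations `r1 r2 r3` and nonnegative weights `X Y Z`. -/
noncomputable def gcost (p X Y Z r1 r2 r3 w : ℝ) : ℝ :=
  |w - r1| ^ p * X + |w - r2| ^ p * Y + |w - r3| ^ p * Z

private lemma my_subadd {p : ℝ} (hp0 : 0 < p) (hp1 : p ≤ 1) (u v : ℝ) :
    |u + v| ^ p ≤ |u| ^ p + |v| ^ p := by
  have h1 : |u + v| ^ p ≤ (|u| + |v|) ^ p :=
    Real.rpow_le_rpow (abs_nonneg _) (abs_add_le u v) hp0.le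
  refine h1.trans ?_
  have h2 := NNReal.rpow_add_le_add_rpow (⟨|u|, abs_nonneg u⟩ : NNReal)
    (⟨|v|, abs_nonneg v⟩ : NNReal) hp0.le hp1
  exact_mod_cast h2

private lemma my_jensen {p : ℝ} (hp0 : 0 < p) (hp1 : p ≤ 1) {θ τ x y : ℝ}
    (hθ : 0 ≤ θ) (hτ : 0 ≤ τ) (hθτ : θ + τ = 1) (hx : 0 ≤ x) (hy : 0 ≤ y) :
    θ * x ^ p + τ * y ^ p ≤ (θ * x + τ * y) ^ p := by
  have h := (Real.concaveOn_rpow hp0.le hp1).2 (Set.mem_Ici.2 hx) (Set.mem_Ici.2 hy) hθ hτ hθτ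
  simpa [smul_eq_mul] using h

private lemma gcost_le_gcost {p X Y Z r1 r2 r3 : ℝ} (hp0 : 0 < p)
    (hX : 0 ≤ X) (hY : 0 ≤ Y) (hZ : 0 ≤ Z) {k w : ℝ}
    (h1 : |k - r1| ≤ |w - r1|) (h2 : |k - r2| ≤ |w - r2|) (h3 : |k - r3| ≤ |w - r3|) :
    gcost p X Y Z r1 r2 r3 k ≤ gcost p X Y Z r1 r2 r3 w := by
  unfold gcost
  have e1 := Real.rpow_le_rpow (abs_nonneg _) h1 hp0.le
  have e2 := Real.rpow_le_rpow (abs_nonneg _) h2 hp0.le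
  have e3 := Real.rpow_le_rpow (abs_nonneg _) h3 hp0.le
  exact add_le_add (add_le_add (mul_le_mul_of_nonneg_right e1 hX)
    (mul_le_mul_of_nonneg_right e2 hY)) (mul_le_mul_of_nonneg_right e3 hZ)

private lemma gcost_icc {p X Y Z r1 r2 r3 : ℝ} (hp0 : 0 < p) (hp1 : p ≤ 1)
    (hX : 0 ≤ X) (hY : 0 ≤ Y) (hZ : 0 ≤ Z) {k1 k2 w : ℝ}
    (hw1 : k1 ≤ w) (hw2 : w ≤ k2)
    (c1 : r1 ≤ k1 ∨ k2 ≤ r1) (c2 : r2 ≤ k1 ∨ k2 ≤ r2) (c3 : r3 ≤ k1 ∨ k2 ≤ r3) :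
    min (gcost p X Y Z r1 r2 r3 k1) (gcost p X Y Z r1 r2 r3 k2)
      ≤ gcost p X Y Z r1 r2 r3 w := by
  rcases eq_or_lt_of_le (hw1.trans hw2) with heq | hlt
  · have hw : w = k1 := le_antisymm (heq ▸ hw2) hw1
    rw [hw]; exact min_le_left _ _
  · have hne : k2 - k1 ≠ 0 := sub_ne_zero.2 hlt.ne'
    set θ := (k2 - w) / (k2 - k1) with hθdef
    set τ := (w - k1) / (k2 - k1) with hτdef
    have hθ : 0 ≤ θ := div_nonneg (by linarith) (by linarith)
    have hτ : 0 ≤ τ := div_nonneg (by linarith) (by linarith)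
    have hθτ : θ + τ = 1 := by rw [hθdef, hτdef]; field_simp; ring
    have hw : w = θ * k1 + τ * k2 := by rw [hθdef, hτdef]; field_simp; ring
    have habs : ∀ r : ℝ, (r ≤ k1 ∨ k2 ≤ r) → |w - r| = θ * |k1 - r| + τ * |k2 - r| := by
      intro r hc
      rcases hc with hc | hc
      · rw [abs_of_nonneg (by linarith : (0:ℝ) ≤ w - r),
          abs_of_nonneg (by linarith : (0:ℝ) ≤ k1 - r),
          abs_of_nonneg (by linarith : (0:ℝ) ≤ k2 - r)]
        linear_combination hw + r * hθτ
      · rw [abs_of_nonpos (by linarith : w - r ≤ 0),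
          abs_of_nonpos (by linarith : k1 - r ≤ 0),
          abs_of_nonpos (by linarith : k2 - r ≤ 0)]
        linear_combination -hw - r * hθτ
    have hterm : ∀ r : ℝ, (r ≤ k1 ∨ k2 ≤ r) →
        θ * |k1 - r| ^ p + τ * |k2 - r| ^ p ≤ |w - r| ^ p := by
      intro r hc
      rw [habs r hc]
      exact my_jensen hp0 hp1 hθ hτ hθτ (abs_nonneg _) (abs_nonneg _)
    have e1 := mul_le_mul_of_nonneg_right (hterm r1 c1) hX
    have e2 := mul_le_mul_of_nonneg_right (hterm r2 c2) hY
    have e3 := mul_le_mul_of_nonneg_right (hterm r3 c3) hZ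
    set g1 := gcost p X Y Z r1 r2 r3 k1 with hg1
    set g2 := gcost p X Y Z r1 r2 r3 k2 with hg2
    have step1 : min g1 g2 ≤ θ * g1 + τ * g2 := by
      calc min g1 g2 = (θ + τ) * min g1 g2 := by rw [hθτ, one_mul]
        _ = θ * min g1 g2 + τ * min g1 g2 := by ring
        _ ≤ θ * g1 + τ * g2 :=
          add_le_add (mul_le_mul_of_nonneg_left (min_le_left _ _) hθ)
            (mul_le_mul_of_nonneg_left (min_le_right _ _) hτ)
    refine step1.trans ?_
    rw [hg1, hg2]
    unfold gcost
    nlinarith [e1, e2, e3]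

private lemma gcost_sorted {p X Y Z r1 r2 r3 : ℝ} (hp0 : 0 < p) (hp1 : p ≤ 1)
    (hX : 0 ≤ X) (hY : 0 ≤ Y) (hZ : 0 ≤ Z) {s1 s2 s3 : ℝ} (C : ℝ)
    (h12 : s1 ≤ s2) (h23 : s2 ≤ s3)
    (m1 : r1 = s1 ∨ r1 = s2 ∨ r1 = s3)
    (m2 : r2 = s1 ∨ r2 = s2 ∨ r2 = s3)
    (m3 : r3 = s1 ∨ r3 = s2 ∨ r3 = s3)
    (hb1 : C ≤ gcost p X Y Z r1 r2 r3 s1)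
    (hb2 : C ≤ gcost p X Y Z r1 r2 r3 s2)
    (hb3 : C ≤ gcost p X Y Z r1 r2 r3 s3) :
    ∀ w, C ≤ gcost p X Y Z r1 r2 r3 w := by
  intro w
  have hr1l : s1 ≤ r1 := by rcases m1 with rfl | rfl | rfl <;> linarith
  have hr2l : s1 ≤ r2 := by rcases m2 with rfl | rfl | rfl <;> linarith
  have hr3l : s1 ≤ r3 := by rcases m3 with rfl | rfl | rfl <;> linarith
  have hr1u : r1 ≤ s3 := by rcases m1 with rfl | rfl | rfl <;> linarith
  have hr2u : r2 ≤ s3 := by rcases m2 with rfl | rfl | rfl <;> linarith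
  have hr3u : r3 ≤ s3 := by rcases m3 with rfl | rfl | rfl <;> linarith
  rcases le_total w s1 with hw | hw
  · refine hb1.trans (gcost_le_gcost hp0 hX hY hZ ?_ ?_ ?_)
    · rw [abs_of_nonpos (by linarith), abs_of_nonpos (by linarith)]; linarith
    · rw [abs_of_nonpos (by linarith), abs_of_nonpos (by linarith)]; linarith
    · rw [abs_of_nonpos (by linarith), abs_of_nonpos (by linarith)]; linarith
  rcases le_total w s2 with hw2 | hw2
  · have c1 : r1 ≤ s1 ∨ s2 ≤ r1 := by
      rcases m1 with rfl | rfl | rfl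
      exacts [Or.inl le_rfl, Or.inr le_rfl, Or.inr h23]
    have c2 : r2 ≤ s1 ∨ s2 ≤ r2 := by
      rcases m2 with rfl | rfl | rfl
      exacts [Or.inl le_rfl, Or.inr le_rfl, Or.inr h23]
    have c3 : r3 ≤ s1 ∨ s2 ≤ r3 := by
      rcases m3 with rfl | rfl | rfl
      exacts [Or.inl le_rfl, Or.inr le_rfl, Or.inr h23]
    exact (le_min hb1 hb2).trans (gcost_icc hp0 hp1 hX hY hZ hw hw2 c1 c2 c3)
  rcases le_total w s3 with hw3 | hw3
  · have c1 : r1 ≤ s2 ∨ s3 ≤ r1 := by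
      rcases m1 with rfl | rfl | rfl
      exacts [Or.inl h12, Or.inl le_rfl, Or.inr le_rfl]
    have c2 : r2 ≤ s2 ∨ s3 ≤ r2 := by
      rcases m2 with rfl | rfl | rfl
      exacts [Or.inl h12, Or.inl le_rfl, Or.inr le_rfl]
    have c3 : r3 ≤ s2 ∨ s3 ≤ r3 := by
      rcases m3 with rfl | rfl | rfl
      exacts [Or.inl h12, Or.inl le_rfl, Or.inr le_rfl]
    exact (le_min hb2 hb3).trans (gcost_icc hp0 hp1 hX hY hZ hw2 hw3 c1 c2 c3)
  · refine hb3.trans (gcost_le_gcost hp0 hX hY hZ ?_ ?_ ?_)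
    · rw [abs_of_nonneg (by linarith), abs_of_nonneg (by linarith)]; linarith
    · rw [abs_of_nonneg (by linarith), abs_of_nonneg (by linarith)]; linarith
    · rw [abs_of_nonneg (by linarith), abs_of_nonneg (by linarith)]; linarith

private lemma gcost_min {p X Y Z : ℝ} (hp0 : 0 < p) (hp1 : p ≤ 1)
    (hX : 0 ≤ X) (hY : 0 ≤ Y) (hZ : 0 ≤ Z) (r1 r2 r3 : ℝ) :
    ∀ w, min (min (gcost p X Y Z r1 r2 r3 r1) (gcost p X Y Z r1 r2 r3 r2))
      (gcost p X Y Z r1 r2 r3 r3) ≤ gcost p X Y Z r1 r2 r3 w := by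
  set C := min (min (gcost p X Y Z r1 r2 r3 r1) (gcost p X Y Z r1 r2 r3 r2))
    (gcost p X Y Z r1 r2 r3 r3) with hC
  have hm1 : C ≤ gcost p X Y Z r1 r2 r3 r1 := (min_le_left _ _).trans (min_le_left _ _)
  have hm2 : C ≤ gcost p X Y Z r1 r2 r3 r2 := (min_le_left _ _).trans (min_le_right _ _)
  have hm3 : C ≤ gcost p X Y Z r1 r2 r3 r3 := min_le_right _ _
  rcases le_total r1 r2 with h12 | h21
  · rcases le_total r2 r3 with h23 | h32
    · exact gcost_sorted hp0 hp1 hX hY hZ C h12 h23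
        (Or.inl rfl) (Or.inr (Or.inl rfl)) (Or.inr (Or.inr rfl)) hm1 hm2 hm3
    · rcases le_total r1 r3 with h13 | h31
      · exact gcost_sorted hp0 hp1 hX hY hZ C h13 h32
          (Or.inl rfl) (Or.inr (Or.inr rfl)) (Or.inr (Or.inl rfl)) hm1 hm3 hm2
      · exact gcost_sorted hp0 hp1 hX hY hZ C h31 h12
          (Or.inr (Or.inl rfl)) (Or.inr (Or.inr rfl)) (Or.inl rfl) hm3 hm1 hm2
  · rcases le_total r1 r3 with h13 | h31
    · exact gcost_sorted hp0 hp1 hX hY hZ C h21 h13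
        (Or.inr (Or.inl rfl)) (Or.inl rfl) (Or.inr (Or.inr rfl)) hm2 hm1 hm3
    · rcases le_total r2 r3 with h23 | h32
      · exact gcost_sorted hp0 hp1 hX hY hZ C h23 h31
          (Or.inr (Or.inr rfl)) (Or.inl rfl) (Or.inr (Or.inl rfl)) hm2 hm3 hm1
      · exact gcost_sorted hp0 hp1 hX hY hZ C h32 h21
          (Or.inr (Or.inr rfl)) (Or.inr (Or.inl rfl)) (Or.inl rfl) hm3 hm2 hm1

private lemma min3_mem (x y z : ℝ) :
    min (min x y) z = x ∨ min (min x y) z = y ∨ min (min x y) z = z := by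
  rcases min_cases (min x y) z with ⟨h, -⟩ | ⟨h, -⟩
  · rcases min_cases x y with ⟨h2, -⟩ | ⟨h2, -⟩
    · exact Or.inl (h.trans h2)
    · exact Or.inr (Or.inl (h.trans h2))
  · exact Or.inr (Or.inr h)

/-- on a pointed `p`-metric space `M = {0, x, y}`, the three-term
minimum formula `N(a,b)` for the Lipschitz-free `p`-norm of `a·δ(x) + b·δ(y)`
defines (via `N(a,b)^{1/p}`) a `p`-norm on `ℝ²`: it vanishes exactly at `0`,
is absolutely homogeneous, and satisfies the `p`-triangle inequality. -/
theorem stmt_5 (p : ℝ) (hp0 : 0 < p) (hp1 : p ≤ 1)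
    (dx dy dxy : ℝ) (hdx : 0 < dx) (hdy : 0 < dy) (hdxy : 0 < dxy)
    (t1 : dx ^ p ≤ dy ^ p + dxy ^ p) (t2 : dy ^ p ≤ dx ^ p + dxy ^ p)
    (t3 : dxy ^ p ≤ dx ^ p + dy ^ p)
    (Nf : ℝ → ℝ → ℝ)
    (hNf : ∀ a b : ℝ, Nf a b =
      min (min (|a * dx| ^ p + |b * dy| ^ p) (|(a + b) * dx| ^ p + |b * dxy| ^ p))
        (|(a + b) * dy| ^ p + |a * dxy| ^ p)) :
    (∀ a b : ℝ, Nf a b ^ (1 / p) = 0 ↔ a = 0 ∧ b = 0) ∧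
    (∀ t a b : ℝ, Nf (t * a) (t * b) ^ (1 / p) = |t| * Nf a b ^ (1 / p)) ∧
    (∀ a b a' b' : ℝ,
      (Nf (a + a') (b + b') ^ (1 / p)) ^ p ≤ (Nf a b ^ (1 / p)) ^ p + (Nf a' b' ^ (1 / p)) ^ p) := by
  have hpne : p ≠ 0 := hp0.ne'
  have hNf_nonneg : ∀ a b : ℝ, 0 ≤ Nf a b := by
    intro a b
    rw [hNf]
    exact le_min (le_min (by positivity) (by positivity)) (by positivity)
  -- `|u*v|^p = |u|^p * v^p` for `v > 0`
  have habsmul : ∀ u v : ℝ, 0 < v → |u * v| ^ p = |u| ^ p * v ^ p := by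
    intro u v hv
    rw [abs_mul, abs_of_pos hv, Real.mul_rpow (abs_nonneg _) hv.le]
  have hzero : |(0 : ℝ)| ^ p = 0 := by rw [abs_zero, Real.zero_rpow hpne]
  set X := dx ^ p with hXdef
  set Y := dy ^ p with hYdef
  set Z := dxy ^ p with hZdef
  have hX : 0 ≤ X := Real.rpow_nonneg hdx.le p
  have hY : 0 ≤ Y := Real.rpow_nonneg hdy.le p
  have hZ : 0 ≤ Z := Real.rpow_nonneg hdxy.le p
  -- values of gcost at the three kinks
  have hG0 : ∀ a b : ℝ, gcost p X Y Z (-a) b 0 0 = |a * dx| ^ p + |b * dy| ^ p := by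
    intro a b
    unfold gcost
    rw [show (0 : ℝ) - -a = a by ring, show (0 : ℝ) - b = -b by ring, sub_self, abs_neg,
      hzero, zero_mul, add_zero, habsmul a dx hdx, habsmul b dy hdy]
  have hGb : ∀ a b : ℝ, gcost p X Y Z (-a) b 0 b = |(a + b) * dx| ^ p + |b * dxy| ^ p := by
    intro a b
    unfold gcost
    rw [show b - -a = a + b by ring, sub_self, sub_zero, hzero, zero_mul,
      habsmul (a + b) dx hdx, habsmul b dxy hdxy]
    ring
  have hGa : ∀ a b : ℝ, gcost p X Y Z (-a) b 0 (-a) = |(a + b) * dy| ^ p + |a * dxy| ^ p := by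
    intro a b
    unfold gcost
    rw [sub_self, show -a - b = -(a + b) by ring, show -a - 0 = -a by ring, abs_neg, abs_neg,
      hzero, zero_mul, habsmul (a + b) dy hdy, habsmul a dxy hdxy]
    ring
  -- Nf is at most gcost at every flow value
  have hNle : ∀ a b w : ℝ, Nf a b ≤ gcost p X Y Z (-a) b 0 w := by
    intro a b w
    have h := gcost_min hp0 hp1 hX hY hZ (-a) b 0 w
    refine le_trans ?_ h
    rw [hNf, hGa, hGb, hG0]
    exact le_min
      (le_min (min_le_right _ _)
        ((min_le_left _ _).trans (min_le_right _ _)))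
      ((min_le_left _ _).trans (min_le_left _ _))
  -- Nf is attained by gcost at one of the kinks
  have hNex : ∀ a b : ℝ, ∃ w : ℝ, gcost p X Y Z (-a) b 0 w = Nf a b := by
    intro a b
    rcases min3_mem (|a * dx| ^ p + |b * dy| ^ p) (|(a + b) * dx| ^ p + |b * dxy| ^ p)
      (|(a + b) * dy| ^ p + |a * dxy| ^ p) with hm | hm | hm
    · exact ⟨0, (hG0 a b).trans ((hNf a b).trans hm).symm⟩
    · exact ⟨b, (hGb a b).trans ((hNf a b).trans hm).symm⟩
    · exact ⟨-a, (hGa a b).trans ((hNf a b).trans hm).symm⟩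
  -- main subadditivity of Nf
  have hNadd : ∀ a b a' b' : ℝ, Nf (a + a') (b + b') ≤ Nf a b + Nf a' b' := by
    intro a b a' b'
    obtain ⟨w, hw⟩ := hNex a b
    obtain ⟨w', hw'⟩ := hNex a' b'
    have hsub : gcost p X Y Z (-(a + a')) (b + b') 0 (w + w')
        ≤ gcost p X Y Z (-a) b 0 w + gcost p X Y Z (-a') b' 0 w' := by
      unfold gcost
      have h1 : |(w + w') - -(a + a')| ^ p ≤ |w - -a| ^ p + |w' - -a'| ^ p := by
        rw [show (w + w') - -(a + a') = (w - -a) + (w' - -a') by ring]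
        exact my_subadd hp0 hp1 _ _
      have h2 : |(w + w') - (b + b')| ^ p ≤ |w - b| ^ p + |w' - b'| ^ p := by
        rw [show (w + w') - (b + b') = (w - b) + (w' - b') by ring]
        exact my_subadd hp0 hp1 _ _
      have h3 : |(w + w') - 0| ^ p ≤ |w - 0| ^ p + |w' - 0| ^ p := by
        rw [show (w + w') - 0 = (w - 0) + (w' - 0) by ring]
        exact my_subadd hp0 hp1 _ _
      have e1 := mul_le_mul_of_nonneg_right h1 hX
      have e2 := mul_le_mul_of_nonneg_right h2 hY
      have e3 := mul_le_mul_of_nonneg_right h3 hZ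
      rw [add_mul] at e1 e2 e3
      linarith
    calc Nf (a + a') (b + b') ≤ gcost p X Y Z (-(a + a')) (b + b') 0 (w + w') :=
          hNle (a + a') (b + b') (w + w')
      _ ≤ gcost p X Y Z (-a) b 0 w + gcost p X Y Z (-a') b' 0 w' := hsub
      _ = Nf a b + Nf a' b' := by rw [hw, hw']
  refine ⟨?_, ?_, ?_⟩
  -- (1) definiteness
  · intro a b
    constructor
    · intro h
      have hN0 : Nf a b = 0 :=
        (Real.rpow_eq_zero (hNf_nonneg a b) (one_div_ne_zero hpne)).mp h
      rw [hNf] at hN0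
      have hvan : ∀ u v : ℝ, 0 < v → |u * v| ^ p = 0 → u = 0 := by
        intro u v hv huv
        have h1 : |u * v| = 0 := (Real.rpow_eq_zero (abs_nonneg _) hpne).mp huv
        have h2 : u * v = 0 := abs_eq_zero.mp h1
        rcases mul_eq_zero.mp h2 with h | h
        · exact h
        · exact absurd h hv.ne'
      have hp1' : 0 ≤ |a * dx| ^ p := Real.rpow_nonneg (abs_nonneg _) p
      have hp2' : 0 ≤ |b * dy| ^ p := Real.rpow_nonneg (abs_nonneg _) p
      have hp3' : 0 ≤ |(a + b) * dx| ^ p := Real.rpow_nonneg (abs_nonneg _) p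
      have hp4' : 0 ≤ |b * dxy| ^ p := Real.rpow_nonneg (abs_nonneg _) p
      have hp5' : 0 ≤ |(a + b) * dy| ^ p := Real.rpow_nonneg (abs_nonneg _) p
      have hp6' : 0 ≤ |a * dxy| ^ p := Real.rpow_nonneg (abs_nonneg _) p
      rcases min3_mem (|a * dx| ^ p + |b * dy| ^ p) (|(a + b) * dx| ^ p + |b * dxy| ^ p)
        (|(a + b) * dy| ^ p + |a * dxy| ^ p) with hm | hm | hm <;> rw [hN0] at hm
      · have ha := hvan a dx hdx (by linarith)
        have hb := hvan b dy hdy (by linarith)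
        exact ⟨ha, hb⟩
      · have hab := hvan (a + b) dx hdx (by linarith)
        have hb := hvan b dxy hdxy (by linarith)
        exact ⟨by linarith, hb⟩
      · have hab := hvan (a + b) dy hdy (by linarith)
        have ha := hvan a dxy hdxy (by linarith)
        exact ⟨ha, by linarith⟩
    · rintro ⟨rfl, rfl⟩
      have h0 : Nf 0 0 = 0 := by
        rw [hNf]
        simp [hzero, Real.zero_rpow hpne]
      rw [h0, Real.zero_rpow (one_div_ne_zero hpne)]
  -- (2) homogeneity
  · intro t a b
    have hhom : Nf (t * a) (t * b) = |t| ^ p * Nf a b := by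
      rw [hNf, hNf]
      have key : ∀ u v : ℝ, 0 < v → |t * u * v| ^ p = |t| ^ p * |u * v| ^ p := by
        intro u v hv
        rw [mul_assoc, abs_mul, Real.mul_rpow (abs_nonneg _) (abs_nonneg _)]
      have e1 := key a dx hdx
      have e2 := key b dy hdy
      have e3 := key (a + b) dx hdx
      have e4 := key b dxy hdxy
      have e5 := key (a + b) dy hdy
      have e6 := key a dxy hdxy
      rw [show t * a + t * b = t * (a + b) by ring, e1, e2, e3, e4, e5, e6,
        ← mul_add, ← mul_add, ← mul_add]
      have hmono : Monotone fun x : ℝ => |t| ^ p * x :=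
        fun x y hxy => mul_le_mul_of_nonneg_left hxy (Real.rpow_nonneg (abs_nonneg t) p)
      rw [← hmono.map_min, ← hmono.map_min]
    rw [hhom, Real.mul_rpow (Real.rpow_nonneg (abs_nonneg t) p) (hNf_nonneg a b),
      ← Real.rpow_mul (abs_nonneg t), mul_one_div_cancel hpne, Real.rpow_one]
  -- (3) p-triangle inequality
  · intro a b a' b'
    have hpow : ∀ x : ℝ, 0 ≤ x → (x ^ (1 / p)) ^ p = x := by
      intro x hx
      rw [← Real.rpow_mul hx, one_div_mul_cancel hpne, Real.rpow_one]
    rw [hpow _ (hNf_nonneg (a + a') (b + b')), hpow _ (hNf_nonneg a b),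
      hpow _ (hNf_nonneg a' b')]
    exact hNadd a b a' b'
end

section
/- Let 0 < p < 1 and let d_x, d_y, d_{xy} > 0 satisfy the three p-triangle inequalities (d_x^p ≤ d_y^p + d_{xy}^p, etc.). For a, b ∈ ℝ define C := |a+b|^p (d_x^p + d_y^p - d_{xy}^p)/2 + |a|^p (d_{xy}^p + d_x^p - d_y^p)/2 + |b|^p (d_{xy}^p + d_y^p - d_x^p)/2. Then C ≤ min{|a|^p d_x^p + |b|^p d_y^p, |a+b|^p d_x^p + |b|^p d_{xy}^p, |a+b|^p d_y^p + |a|^p d_{xy}^p}, with equality if and only if one of the following holds: d_x^p + d_y^p = d_{xy}^p, d_x^p + d_{xy}^p = d_y^p, d_y^p + d_{xy}^p = d_x^p, ab = 0, or a = -b. -/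
/-!
Each of the three bounds exceeds `C` by half a product of two nonnegative defects, e.g.
`2 * (|a|^p dx^p + |b|^p dy^p - C) = (|a|^p + |b|^p - |a+b|^p) * (dx^p + dy^p - dxy^p)`:
a defect of the `p`-subadditivity of `|·|^p` times a defect of a `p`-triangle inequality.
So `C` is at most the minimum, with equality iff for one bound one of the two factors vanishes.
By strict subadditivity of `t ↦ t^p` on positive reals, the first factors vanish exactly when
`a * b = 0`, `(a + b) * b = 0` and `(a + b) * a = 0` respectively.
-/

namespace Real

variable {p : ℝ}

lemma rpow_add_lt_add_rpow {x y : ℝ} (hp1 : p < 1) (hx : 0 < x) (hy : 0 < y) :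
    (x + y) ^ p < x ^ p + y ^ p := by
  have hs : 0 < x + y := by positivity
  have part (u : ℝ) (hu : 0 < u) (hus : u < x + y) : (x + y) ^ p * (u / (x + y)) < u ^ p := by
    calc (x + y) ^ p * (u / (x + y)) < (x + y) ^ p * (u / (x + y)) ^ p := by
          gcongr
          exact self_lt_rpow_of_lt_one (by positivity) ((div_lt_one hs).2 hus) hp1
      _ = u ^ p := by rw [← mul_rpow hs.le (by positivity), mul_div_cancel₀ _ hs.ne']
  calc (x + y) ^ p = (x + y) ^ p * (x / (x + y)) + (x + y) ^ p * (y / (x + y)) := by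
        field_simp
    _ < x ^ p + y ^ p := add_lt_add (part x hx (by linarith)) (part y hy (by linarith))

lemma abs_add_rpow_le (hp0 : 0 ≤ p) (hp1 : p ≤ 1) (s t : ℝ) :
    |s + t| ^ p ≤ |s| ^ p + |t| ^ p :=
  (rpow_le_rpow (abs_nonneg _) (abs_add_le s t) hp0).trans
    (rpow_add_le_add_rpow (abs_nonneg _) (abs_nonneg _) hp0 hp1)

lemma abs_rpow_add_abs_rpow_eq_iff (hp0 : 0 < p) (hp1 : p < 1) (s t : ℝ) :
    |s| ^ p + |t| ^ p = |s + t| ^ p ↔ s * t = 0 := by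
  constructor
  · contrapose!
    intro hst
    obtain ⟨hs, ht⟩ := mul_ne_zero_iff.mp hst
    refine (lt_of_le_of_lt ?_ (rpow_add_lt_add_rpow hp1 (abs_pos.2 hs) (abs_pos.2 ht))).ne'
    exact rpow_le_rpow (abs_nonneg _) (abs_add_le s t) hp0.le
  · intro h
    rcases mul_eq_zero.mp h with rfl | rfl <;> simp [zero_rpow hp0.ne']

lemma abs_rpow_le_abs_add_rpow_add (hp0 : 0 ≤ p) (hp1 : p ≤ 1) (s t : ℝ) :
    |s| ^ p ≤ |s + t| ^ p + |t| ^ p := by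
  simpa using abs_add_rpow_le hp0 hp1 (s + t) (-t)

lemma abs_add_rpow_add_abs_rpow_eq_iff (hp0 : 0 < p) (hp1 : p < 1) (s t : ℝ) :
    |s + t| ^ p + |t| ^ p = |s| ^ p ↔ (s + t) * t = 0 := by
  simpa using abs_rpow_add_abs_rpow_eq_iff hp0 hp1 (s + t) (-t)

end Real

lemma le_and_eq_iff_of_two_mul_sub_eq_mul {C m u v : ℝ} (hu : 0 ≤ u) (hv : 0 ≤ v)
    (h : 2 * (m - C) = u * v) : C ≤ m ∧ (C = m ↔ u = 0 ∨ v = 0) := by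
  refine ⟨by nlinarith [mul_nonneg hu hv], ?_⟩
  rw [← mul_eq_zero, ← h]
  constructor <;> intro <;> linarith

lemma eq_min_min_iff_of_le {α : Type*} [LinearOrder α] {x a b c : α} (ha : x ≤ a) (hb : x ≤ b)
    (hc : x ≤ c) : x = min (min a b) c ↔ x = a ∨ x = b ∨ x = c := by
  grind

theorem stmt_6_general (p : ℝ) (hp0 : 0 < p) (hp1 : p < 1)
    (dx dy dxy : ℝ)
    (t1 : dx ^ p ≤ dy ^ p + dxy ^ p) (t2 : dy ^ p ≤ dx ^ p + dxy ^ p)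
    (t3 : dxy ^ p ≤ dx ^ p + dy ^ p)
    (a b : ℝ) (C : ℝ)
    (hC : C = |a + b| ^ p * ((dx ^ p + dy ^ p - dxy ^ p) / 2)
        + |a| ^ p * ((dxy ^ p + dx ^ p - dy ^ p) / 2)
        + |b| ^ p * ((dxy ^ p + dy ^ p - dx ^ p) / 2)) :
    C ≤ min (min (|a| ^ p * dx ^ p + |b| ^ p * dy ^ p)
          (|a + b| ^ p * dx ^ p + |b| ^ p * dxy ^ p))
        (|a + b| ^ p * dy ^ p + |a| ^ p * dxy ^ p) ∧
    (C = min (min (|a| ^ p * dx ^ p + |b| ^ p * dy ^ p)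
          (|a + b| ^ p * dx ^ p + |b| ^ p * dxy ^ p))
        (|a + b| ^ p * dy ^ p + |a| ^ p * dxy ^ p) ↔
      (dx ^ p + dy ^ p = dxy ^ p ∨ dx ^ p + dxy ^ p = dy ^ p ∨
        dy ^ p + dxy ^ p = dx ^ p ∨ a * b = 0 ∨ a = -b)) := by
  obtain ⟨le₁, eq₁⟩ := le_and_eq_iff_of_two_mul_sub_eq_mul
    (C := C) (m := |a| ^ p * dx ^ p + |b| ^ p * dy ^ p)
    (sub_nonneg.2 (Real.abs_add_rpow_le hp0.le hp1.le a b)) (sub_nonneg.2 t3)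
    (by rw [hC]; ring)
  obtain ⟨le₂, eq₂⟩ := le_and_eq_iff_of_two_mul_sub_eq_mul
    (C := C) (m := |a + b| ^ p * dx ^ p + |b| ^ p * dxy ^ p)
    (sub_nonneg.2 (Real.abs_rpow_le_abs_add_rpow_add hp0.le hp1.le a b)) (sub_nonneg.2 t2)
    (by rw [hC]; ring)
  have tri_ba := Real.abs_rpow_le_abs_add_rpow_add hp0.le hp1.le b a
  have eq_ba := Real.abs_add_rpow_add_abs_rpow_eq_iff hp0 hp1 b a
  rw [add_comm b a] at tri_ba eq_ba
  obtain ⟨le₃, eq₃⟩ := le_and_eq_iff_of_two_mul_sub_eq_mul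
    (C := C) (m := |a + b| ^ p * dy ^ p + |a| ^ p * dxy ^ p)
    (sub_nonneg.2 tri_ba) (sub_nonneg.2 t1) (by rw [hC]; ring)
  refine ⟨le_min (le_min le₁ le₂) le₃, ?_⟩
  rw [eq_min_min_iff_of_le le₁ le₂ le₃, eq₁, eq₂, eq₃]
  simp only [sub_eq_zero, Real.abs_rpow_add_abs_rpow_eq_iff hp0 hp1,
    Real.abs_add_rpow_add_abs_rpow_eq_iff hp0 hp1, eq_ba, mul_eq_zero, add_eq_zero_iff_eq_neg]
  grind

/-- the quantity `C` is a lower bound for the three-term minimum,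
with equality iff one of the degeneracy conditions holds. -/
theorem stmt_6 (p : ℝ) (hp0 : 0 < p) (hp1 : p < 1)
    (dx dy dxy : ℝ) (hdx : 0 < dx) (hdy : 0 < dy) (hdxy : 0 < dxy)
    (t1 : dx ^ p ≤ dy ^ p + dxy ^ p) (t2 : dy ^ p ≤ dx ^ p + dxy ^ p)
    (t3 : dxy ^ p ≤ dx ^ p + dy ^ p)
    (a b : ℝ) (C : ℝ)
    (hC : C = |a + b| ^ p * ((dx ^ p + dy ^ p - dxy ^ p) / 2)
        + |a| ^ p * ((dxy ^ p + dx ^ p - dy ^ p) / 2)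
        + |b| ^ p * ((dxy ^ p + dy ^ p - dx ^ p) / 2)) :
    C ≤ min (min (|a| ^ p * dx ^ p + |b| ^ p * dy ^ p)
          (|a + b| ^ p * dx ^ p + |b| ^ p * dxy ^ p))
        (|a + b| ^ p * dy ^ p + |a| ^ p * dxy ^ p) ∧
    (C = min (min (|a| ^ p * dx ^ p + |b| ^ p * dy ^ p)
          (|a + b| ^ p * dx ^ p + |b| ^ p * dxy ^ p))
        (|a + b| ^ p * dy ^ p + |a| ^ p * dxy ^ p) ↔
      (dx ^ p + dy ^ p = dxy ^ p ∨ dx ^ p + dxy ^ p = dy ^ p ∨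
        dy ^ p + dxy ^ p = dx ^ p ∨ a * b = 0 ∨ a = -b)) :=
  stmt_6_general p hp0 hp1 dx dy dxy t1 t2 t3 a b C hC
end

section
/- Let 0 < p < 1 and let (M, d, 0) be a pointed metric space with M = {0, x, y} such that none of the three p-triangle inequalities among d(x,0), d(y,0), d(x,y) is an equality. Define d'(x,z) := ((d^p(x,0) + d^p(x,y) - d^p(y,0))/2)^{1/p}, d'(y,z) := ((d^p(y,0) + d^p(x,y) - d^p(x,0))/2)^{1/p}, d'(0,z) := ((d^p(x,0) + d^p(y,0) - d^p(x,y))/2)^{1/p}, and d' = d on {0,x,y}. Then d' is a p-metric on M' = {0, x, y, z}, i.e., (M', d'^p) is a metric space. -/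
/-!
Write `a = d(x,0)^p`, `b = d(y,0)^p`, `c = d(x,y)^p`. The three new `p`-distances
`u = (a + c - b)/2`, `v = (b + c - a)/2`, `w = (a + b - c)/2` are positive by the strict
`p`-triangle inequalities and satisfy `a = w + u`, `b = w + v`, `c = u + v`. Hence `d'^p` is
the path metric of the star with centre `z` and edges of lengths `w, u, v` to `0, x, y`,
and a star metric with nonnegative edge lengths satisfies the triangle inequality.
-/

open Real

/-- Path metric of a star whose leaf `i` hangs from the centre by an edge of length `r i`;
the centre is itself a point `c` with `r c = 0`. -/
def starDist {ι : Type*} [DecidableEq ι] (r : ι → ℝ) (i j : ι) : ℝ :=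
  if i = j then 0 else r i + r j

section StarDist

variable {ι : Type*} [DecidableEq ι] (r : ι → ℝ)

@[simp]
lemma starDist_self (i : ι) : starDist r i i = 0 := if_pos rfl

lemma starDist_comm (i j : ι) : starDist r i j = starDist r j i := by
  by_cases h : i = j
  · subst h; rfl
  · simp only [starDist, if_neg h, if_neg (Ne.symm h), add_comm]

lemma starDist_nonneg (hr : ∀ i, 0 ≤ r i) (i j : ι) : 0 ≤ starDist r i j := by
  unfold starDist
  split_ifs
  · rfl
  · exact add_nonneg (hr i) (hr j)

lemma starDist_pos {c : ι} (hc : ∀ i, i ≠ c → 0 < r i) (hr : ∀ i, 0 ≤ r i) {i j : ι}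
    (hij : i ≠ j) : 0 < starDist r i j := by
  rw [starDist, if_neg hij]
  by_cases hi : i = c
  · exact add_pos_of_nonneg_of_pos (hr i) (hc j (hi ▸ hij.symm))
  · exact add_pos_of_pos_of_nonneg (hc i hi) (hr j)

lemma starDist_triangle (hr : ∀ i, 0 ≤ r i) (i j k : ι) :
    starDist r i k ≤ starDist r i j + starDist r j k := by
  by_cases hij : i = j
  · subst hij; simp
  by_cases hjk : j = k
  · subst hjk; simp
  unfold starDist
  split_ifs <;> linarith [hr i, hr j, hr k]

end StarDist

lemma eq_of_symm_of_eq_of_lt {α β : Type*} [LinearOrder α] {f g : α → α → β}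
    (hf : ∀ i j, f i j = f j i) (hg : ∀ i j, g i j = g j i) (hdiag : ∀ i, f i i = g i i)
    (hlt : ∀ i j, i < j → f i j = g i j) : f = g := by
  funext i j
  rcases lt_trichotomy i j with h | rfl | h
  · exact hlt i j h
  · exact hdiag i
  · rw [hf, hg]; exact hlt j i h

lemma rpow_one_div_rpow_le_of_le {p x y z : ℝ} (hp : p ≠ 0) (hx : 0 ≤ x) (hy : 0 ≤ y)
    (hz : 0 ≤ z) (h : x ≤ y + z) :
    (x ^ (1 / p)) ^ p ≤ (y ^ (1 / p)) ^ p + (z ^ (1 / p)) ^ p := by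
  simpa only [one_div, rpow_inv_rpow hx hp, rpow_inv_rpow hy hp, rpow_inv_rpow hz hp] using h

theorem stmt_8_general (p : ℝ) (hp0 : 0 < p)
    (dx dy dxy : ℝ) (hdx : 0 < dx) (hdy : 0 < dy) (hdxy : 0 < dxy)
    (t1 : dx ^ p < dy ^ p + dxy ^ p) (t2 : dy ^ p < dx ^ p + dxy ^ p)
    (t3 : dxy ^ p < dx ^ p + dy ^ p)
    (D : Fin 4 → Fin 4 → ℝ)
    (hsym : ∀ i j, D i j = D j i) (hdiag : ∀ i, D i i = 0)
    (h01 : D 0 1 = dx) (h02 : D 0 2 = dy) (h12 : D 1 2 = dxy)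
    (h13 : D 1 3 = ((dx ^ p + dxy ^ p - dy ^ p) / 2) ^ (1 / p))
    (h23 : D 2 3 = ((dy ^ p + dxy ^ p - dx ^ p) / 2) ^ (1 / p))
    (h03 : D 0 3 = ((dx ^ p + dy ^ p - dxy ^ p) / 2) ^ (1 / p)) :
    (∀ i j : Fin 4, i ≠ j → 0 < D i j) ∧
    (∀ i j k : Fin 4, D i k ^ p ≤ D i j ^ p + D j k ^ p) := by
  set r : Fin 4 → ℝ := ![(dx ^ p + dy ^ p - dxy ^ p) / 2, (dx ^ p + dxy ^ p - dy ^ p) / 2,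
    (dy ^ p + dxy ^ p - dx ^ p) / 2, 0]
  have hleaf : ∀ i, i ≠ 3 → 0 < r i := by
    intro i hi
    fin_cases i <;> simp [r] at hi ⊢ <;> linarith
  have hr : ∀ i, 0 ≤ r i := fun i => by
    by_cases hi : i = 3
    · simp [hi, r]
    · exact (hleaf i hi).le
  have root_eq : ∀ x : ℝ, 0 < x → ∀ s, s = x ^ p → x = s ^ p⁻¹ := fun x hx s hs => by
    rw [hs, rpow_rpow_inv hx.le hp0.ne']
  have hD : D = fun i j => starDist r i j ^ (1 / p) := by
    refine eq_of_symm_of_eq_of_lt hsym (fun i j => by rw [starDist_comm]) ?_ ?_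
    · intro i
      simp [hdiag, zero_rpow (inv_ne_zero hp0.ne')]
    · intro i j hij
      fin_cases i <;> fin_cases j <;> simp [starDist, r, h01, h02, h12, h13, h23, h03] at hij ⊢
      all_goals exact root_eq _ (by assumption) _ (by ring)
  refine ⟨fun i j hij => ?_, fun i j k => ?_⟩
  · rw [hD]
    exact rpow_pos_of_pos (starDist_pos r hleaf hr hij) _
  · rw [hD]
    exact rpow_one_div_rpow_le_of_le hp0.ne' (starDist_nonneg r hr _ _)
      (starDist_nonneg r hr _ _) (starDist_nonneg r hr _ _) (starDist_triangle r hr i j k)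

/-- the Steiner-point extension of a three-point `p`-metric space
`{0, x, y}` (with strict `p`-triangle inequalities) by a fourth point `z` is a
`p`-metric on `{0, x, y, z}`; the points are labelled `0, 1, 2, 3 : Fin 4`
(base point `0`, `x = 1`, `y = 2`, `z = 3`). -/
theorem stmt_8 (p : ℝ) (hp0 : 0 < p) (hp1 : p < 1)
    (dx dy dxy : ℝ) (hdx : 0 < dx) (hdy : 0 < dy) (hdxy : 0 < dxy)
    (t1 : dx ^ p < dy ^ p + dxy ^ p) (t2 : dy ^ p < dx ^ p + dxy ^ p)
    (t3 : dxy ^ p < dx ^ p + dy ^ p)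
    (D : Fin 4 → Fin 4 → ℝ)
    (hsym : ∀ i j, D i j = D j i) (hdiag : ∀ i, D i i = 0)
    (h01 : D 0 1 = dx) (h02 : D 0 2 = dy) (h12 : D 1 2 = dxy)
    (h13 : D 1 3 = ((dx ^ p + dxy ^ p - dy ^ p) / 2) ^ (1 / p))
    (h23 : D 2 3 = ((dy ^ p + dxy ^ p - dx ^ p) / 2) ^ (1 / p))
    (h03 : D 0 3 = ((dx ^ p + dy ^ p - dxy ^ p) / 2) ^ (1 / p)) :
    (∀ i j : Fin 4, i ≠ j → 0 < D i j) ∧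
    (∀ i j k : Fin 4, D i k ^ p ≤ D i j ^ p + D j k ^ p) :=
  stmt_8_general p hp0 dx dy dxy hdx hdy hdxy t1 t2 t3 D hsym hdiag h01 h02 h12 h13 h23 h03
end

section
/- Let 0 < p ≤ q ≤ 1, let (M, d) be a finite q-metric space, and let N ⊆ M with |M \ N| = 1. Then the map r: M → N fixing N and sending the unique point z ∈ M \ N to a nearest point a ∈ N (d(z, a) = d(z, N)) is 2^{1/q}-Lipschitz; in particular, N is a 2^{1/q}-Lipschitz retract of M. -/
/-! If `a` is a nearest point of `N` to `z` and `x ∈ N`, then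
`d(a, x)^q ≤ d(a, z)^q + d(z, x)^q ≤ 2 d(z, x)^q`, so the retraction stretches
distances from `z` by at most `2^{1/q}`; on `N` it is the identity. -/

theorem le_rpow_one_div_mul_of_rpow_le_mul_rpow {x y c q : ℝ} (hx : 0 ≤ x) (hy : 0 ≤ y)
    (hc : 0 ≤ c) (hq : 0 < q) (h : x ^ q ≤ c * y ^ q) : x ≤ c ^ (1 / q) * y := by
  have hcy : c * y ^ q = (c ^ (1 / q) * y) ^ q := by
    rw [Real.mul_rpow (by positivity) hy, ← Real.rpow_mul hc, one_div_mul_cancel hq.ne',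
      Real.rpow_one]
  exact (Real.rpow_le_rpow_iff hx (by positivity) hq).mp (hcy ▸ h)

theorem le_two_rpow_one_div_mul_of_le {M : Type*} {d : M → M → ℝ} {q : ℝ} (hq : 0 < q)
    (hnonneg : ∀ u v, 0 ≤ d u v) (hsym : ∀ u v, d u v = d v u)
    (htri : ∀ u v w, d u w ^ q ≤ d u v ^ q + d v w ^ q) {z a x : M} (hx : d z a ≤ d z x) :
    d a x ≤ 2 ^ (1 / q) * d z x := by
  refine le_rpow_one_div_mul_of_rpow_le_mul_rpow (hnonneg a x) (hnonneg z x) zero_le_two hq ?_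
  have haz : d a z ^ q ≤ d z x ^ q :=
    Real.rpow_le_rpow (hnonneg a z) (hsym a z ▸ hx) hq.le
  calc d a x ^ q ≤ d a z ^ q + d z x ^ q := htri a z x
    _ ≤ 2 * d z x ^ q := by linarith

theorem stmt_9_general (p q : ℝ) (hp0 : 0 < p) (hpq : p ≤ q)
    {M : Type*} (d : M → M → ℝ)
    (hsym : ∀ u v, d u v = d v u) (hdiag : ∀ u, d u u = 0)
    (hpos : ∀ u v, u ≠ v → 0 < d u v)
    (htri : ∀ u v w, d u w ^ q ≤ d u v ^ q + d v w ^ q)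
    (N : Set M) (z : M) (hN : ∀ x, x ∈ N ↔ x ≠ z)
    (a : M) (hamin : ∀ x ∈ N, d z a ≤ d z x)
    (r : M → M) (hrN : ∀ x ∈ N, r x = x) (hrz : r z = a) :
    ∀ u v, d (r u) (r v) ≤ (2 : ℝ) ^ (1 / q) * d u v := by
  have hq : 0 < q := hp0.trans_le hpq
  have hnonneg : ∀ u v, 0 ≤ d u v := fun u v => by
    rcases eq_or_ne u v with rfl | huv
    · exact (hdiag u).ge
    · exact (hpos u v huv).le
  have hz : ∀ x ∈ N, d a x ≤ 2 ^ (1 / q) * d z x := fun x hx =>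
    le_two_rpow_one_div_mul_of_le hq hnonneg hsym htri (hamin x hx)
  intro u v
  rcases eq_or_ne u z with hu | hu <;> rcases eq_or_ne v z with hv | hv
  · rw [hu, hv, hrz, hdiag, hdiag, mul_zero]
  · rw [hu, hrz, hrN v ((hN v).mpr hv)]
    exact hz v ((hN v).mpr hv)
  · rw [hv, hrz, hrN u ((hN u).mpr hu), hsym u a, hsym u z]
    exact hz u ((hN u).mpr hu)
  · rw [hrN u ((hN u).mpr hu), hrN v ((hN v).mpr hv)]
    exact le_mul_of_one_le_left (hnonneg u v) (Real.one_le_rpow one_le_two (by positivity))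

/-- in a finite `q`-metric space `M`, if `M \ N = {z}` then the
nearest-point retraction `r : M → N` (fixing `N`, sending `z` to a nearest
point `a ∈ N`) is `2^{1/q}`-Lipschitz; hence `N` is a `2^{1/q}`-Lipschitz
retract of `M`. -/
theorem stmt_9 (p q : ℝ) (hp0 : 0 < p) (hpq : p ≤ q) (hq1 : q ≤ 1)
    {M : Type*} [Fintype M] (d : M → M → ℝ)
    (hsym : ∀ u v, d u v = d v u) (hdiag : ∀ u, d u u = 0)
    (hpos : ∀ u v, u ≠ v → 0 < d u v)
    (htri : ∀ u v w, d u w ^ q ≤ d u v ^ q + d v w ^ q)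
    (N : Set M) (z : M) (hN : ∀ x, x ∈ N ↔ x ≠ z)
    (a : M) (ha : a ∈ N) (hamin : ∀ x ∈ N, d z a ≤ d z x)
    (r : M → M) (hrN : ∀ x ∈ N, r x = x) (hrz : r z = a) :
    ∀ u v, d (r u) (r v) ≤ (2 : ℝ) ^ (1 / q) * d u v :=
  stmt_9_general p q hp0 hpq d hsym hdiag hpos htri N z hN a hamin r hrN hrz
end

section
/- Let 0 < p ≤ q ≤ 1, let (M, d) be a finite q-metric space and N ⊊ M with |N| ≥ 2. Then N is a (|M \ N| + 1)^{1/q}-Lipschitz retract of M. -/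
open Finset

theorem basso_metric {M : Type*} [Fintype M] (ρ : M → M → ℝ)
    (hsym : ∀ u v, ρ u v = ρ v u) (hdiag : ∀ u, ρ u u = 0)
    (hnonneg : ∀ u v, 0 ≤ ρ u v)
    (htri : ∀ u v w, ρ u w ≤ ρ u v + ρ v w)
    (N : Set M) (hNne : N.Nonempty) :
    ∃ r : M → M, (∀ x, r x ∈ N) ∧ (∀ x ∈ N, r x = x) ∧
      ∀ u v, ρ (r u) (r v) ≤ ((Nᶜ.ncard : ℝ) + 1) * ρ u v := by
  classical
  obtain ⟨n₀, hn₀⟩ := hNne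
  set NF : Finset M := N.toFinset with hNF
  have hmemNF : ∀ x, x ∈ NF ↔ x ∈ N := by simp [hNF]
  set k := Nᶜ.ncard with hk
  have hNFc : NFᶜ.card = k := by
    rw [hk, Set.ncard_eq_toFinset_card', hNF, ← Set.toFinset_compl]
  have hkcard : NF.card + k = Fintype.card M := by
    rw [← hNFc]; exact Finset.card_add_card_compl _
  by_cases hk0 : k = 0
  · refine ⟨id, ?_, fun x _ => rfl, ?_⟩
    · intro x
      have hc : Nᶜ = ∅ := by
        rw [← Set.ncard_eq_zero (Set.toFinite _)]; exact hk0
      by_contra hx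
      have : x ∈ Nᶜ := hx
      rw [hc] at this; exact this
    · intro u v
      have := hnonneg u v
      rw [hk0]
      simpa using this
  have hkpos : 0 < k := Nat.pos_of_ne_zero hk0
  -- existence of the Prim greedy data
  have hexists : ∀ m, m ≤ k → ∃ z p : ℕ → M, ∀ i, i < m →
      ((z i ∉ NF ∧ ∀ j, j < i → z j ≠ z i)
       ∧ (p i ∈ NF ∨ ∃ j, j < i ∧ z j = p i)
       ∧ (∀ y s, (y ∉ NF ∧ ∀ j, j < i → z j ≠ y) →
           (s ∈ NF ∨ ∃ j, j < i ∧ z j = s) → ρ (z i) (p i) ≤ ρ y s)) := by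
    intro m
    induction m with
    | zero => exact fun _ => ⟨fun _ => n₀, fun _ => n₀, fun i hi => absurd hi (by omega)⟩
    | succ m ih =>
      intro hm
      obtain ⟨z, p, hzp⟩ := ih (by omega)
      set S : Finset M := NF ∪ (range m).image z with hS
      have hSmem : ∀ y, y ∈ S ↔ (y ∈ NF ∨ ∃ j, j < m ∧ z j = y) := by
        intro y; simp [hS]
      have hScard : S.card < Fintype.card M := by
        have h1 : S.card ≤ NF.card + m := by
          refine (Finset.card_union_le _ _).trans ?_
          have := Finset.card_image_le (s := range m) (f := z)
          simp only [card_range] at this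
          omega
        omega
      have hScompl : (Sᶜ : Finset M).Nonempty := by
        rw [← Finset.card_pos, Finset.card_compl]
        omega
      have hSne : S.Nonempty := ⟨n₀, by
        rw [hSmem]; exact Or.inl ((hmemNF n₀).2 hn₀)⟩
      obtain ⟨pr, hpr, hprmin⟩ :=
        Finset.exists_min_image (Sᶜ ×ˢ S) (fun y => ρ y.1 y.2) (hScompl.product hSne)
      rw [Finset.mem_product] at hpr
      obtain ⟨hpr1, hpr2⟩ := hpr
      rw [Finset.mem_compl] at hpr1
      refine ⟨Function.update z m pr.1, Function.update p m pr.2, ?_⟩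
      have hzeq : ∀ j, j < m → Function.update z m pr.1 j = z j := fun j hj =>
        Function.update_of_ne (by omega) _ _
      have hzm : Function.update z m pr.1 m = pr.1 := Function.update_self _ _ _
      have hpm : Function.update p m pr.2 m = pr.2 := Function.update_self _ _ _
      intro i hi
      rcases Nat.lt_succ_iff_lt_or_eq.mp hi with hi' | rfl
      · obtain ⟨h1, h2, h3⟩ := hzp i hi'
        have hpeq : Function.update p m pr.2 i = p i := Function.update_of_ne (by omega) _ _
        refine ⟨?_, ?_, ?_⟩
        · rw [hzeq i hi']
          exact ⟨h1.1, fun j hj hne => h1.2 j hj (by rwa [hzeq j (by omega)] at hne)⟩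
        · rw [hpeq]
          rcases h2 with h | ⟨j, hj, hzj⟩
          · exact Or.inl h
          · exact Or.inr ⟨j, hj, by rw [hzeq j (by omega)]; exact hzj⟩
        · intro y s hy hs
          rw [hzeq i hi', hpeq]
          refine h3 y s ⟨hy.1, fun j hj hne => hy.2 j hj (by rwa [hzeq j (by omega)])⟩ ?_
          rcases hs with h | ⟨j, hj, hzj⟩
          · exact Or.inl h
          · exact Or.inr ⟨j, hj, by rw [← hzeq j (by omega)]; exact hzj⟩
      · -- i = m
        have hnotS : ∀ y, y ∉ S ↔ (y ∉ NF ∧ ∀ j, j < i → z j ≠ y) := by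
          intro y; rw [hSmem]; push_neg; rfl
        refine ⟨?_, ?_, ?_⟩
        · rw [hzm]
          obtain ⟨ha, hb⟩ := (hnotS pr.1).1 hpr1
          exact ⟨ha, fun j hj hne => hb j hj (by rwa [hzeq j hj] at hne)⟩
        · rw [hpm]
          rcases (hSmem pr.2).1 hpr2 with h | ⟨j, hj, hzj⟩
          · exact Or.inl h
          · exact Or.inr ⟨j, hj, by rw [hzeq j hj]; exact hzj⟩
        · intro y s hy hs
          rw [hzm, hpm]
          have hyS : y ∈ Sᶜ := by
            rw [Finset.mem_compl, hnotS]
            exact ⟨hy.1, fun j hj => hy.2 j hj ∘ (hzeq j hj ▸ id) ∘ Eq.symm ∘ Eq.symm⟩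
          have hsS : s ∈ S := by
            rw [hSmem]
            rcases hs with h | ⟨j, hj, hzj⟩
            · exact Or.inl h
            · exact Or.inr ⟨j, hj, by rw [← hzeq j hj]; exact hzj⟩
          exact hprmin (y, s) (Finset.mem_product.2 ⟨hyS, hsS⟩)
  obtain ⟨z, p, hzp⟩ := hexists k le_rfl
  have hz1 : ∀ i, i < k → z i ∉ NF := fun i hi => ((hzp i hi).1).1
  have hz2 : ∀ i, i < k → ∀ j, j < i → z j ≠ z i := fun i hi => ((hzp i hi).1).2
  have hp : ∀ i, i < k → (p i ∈ NF ∨ ∃ j, j < i ∧ z j = p i) := fun i hi => (hzp i hi).2.1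
  have hmin : ∀ i, i < k → ∀ y s, (y ∉ NF ∧ ∀ j, j < i → z j ≠ y) →
      (s ∈ NF ∨ ∃ j, j < i ∧ z j = s) → ρ (z i) (p i) ≤ ρ y s := fun i hi => (hzp i hi).2.2
  have hzinj : ∀ i, i < k → ∀ j, j < k → z i = z j → i = j := by
    intro i hi j hj hij
    rcases lt_trichotomy i j with h | h | h
    · exact absurd hij (hz2 j hj i h)
    · exact h
    · exact absurd hij.symm (hz2 i hi j h)
  have hsurj : ∀ x, x ∉ NF → ∃ i, i < k ∧ z i = x := by
    have himg : (range k).image z = NFᶜ := by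
      apply Finset.eq_of_subset_of_card_le
      · intro x hx
        rw [Finset.mem_image] at hx
        obtain ⟨i, hi, rfl⟩ := hx
        rw [Finset.mem_compl]
        exact hz1 i (mem_range.1 hi)
      · rw [hNFc, Finset.card_image_of_injOn, card_range]
        intro a ha b hb hab
        exact hzinj a (mem_range.1 (Finset.mem_coe.1 ha)) b (mem_range.1 (Finset.mem_coe.1 hb)) hab
    intro x hx
    have : x ∈ (range k).image z := by rw [himg, Finset.mem_compl]; exact hx
    rw [Finset.mem_image] at this
    obtain ⟨i, hi, hzi⟩ := this
    exact ⟨i, mem_range.1 hi, hzi⟩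
  have hsurj' : ∀ x : M, ∃ i, i < k ∧ (x ∉ NF → z i = x) := by
    intro x
    by_cases hx : x ∈ NF
    · exact ⟨0, hkpos, fun h => absurd hx h⟩
    · obtain ⟨i, hi, hzi⟩ := hsurj x hx
      exact ⟨i, hi, fun _ => hzi⟩
  choose idx hidxk hidxz using hsurj'
  have hidx_z : ∀ x, x ∉ NF → z (idx x) = x := hidxz
  have hidx_inv : ∀ j, j < k → idx (z j) = j := by
    intro j hj
    exact hzinj _ (hidxk _) _ hj (hidx_z _ (hz1 j hj))
  set step : M → M := fun x => if x ∈ NF then x else p (idx x) with hstep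
  have hstepN : ∀ x, x ∈ NF → step x = x := by
    intro x hx; simp only [hstep]; rw [if_pos hx]
  have hstepNot : ∀ x, x ∉ NF → step x = p (idx x) := by
    intro x hx; simp only [hstep]; rw [if_neg hx]
  have hfix : ∀ (t : ℕ) (x), x ∈ NF → step^[t] x = x :=
    fun t x hx => Function.iterate_fixed (hstepN x hx) t
  have hdesc : ∀ x, x ∉ NF → step x ∈ NF ∨ (step x ∉ NF ∧ idx (step x) < idx x) := by
    intro x hx
    rcases hp (idx x) (hidxk x) with h | ⟨j, hj, hzj⟩
    · left; rw [hstepNot x hx]; exact h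
    · right
      have hjk : j < k := lt_trans hj (hidxk x)
      have hstepx : step x = z j := by rw [hstepNot x hx, ← hzj]
      constructor
      · rw [hstepx]; exact hz1 j hjk
      · rw [hstepx, hidx_inv j hjk]; exact hj
  have hreach : ∀ x, ∃ t, step^[t] x ∈ NF := by
    have key : ∀ n x, x ∉ NF → idx x < n → ∃ t, step^[t] x ∈ NF := by
      intro n
      induction n with
      | zero => intro x _ h; omega
      | succ n ih =>
        intro x hx hxn
        rcases hdesc x hx with h | ⟨h1, h2⟩
        · exact ⟨1, by simpa using h⟩
        · obtain ⟨t, ht⟩ := ih (step x) h1 (by omega)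
          exact ⟨t + 1, by rw [Function.iterate_succ_apply]; exact ht⟩
    intro x
    by_cases hx : x ∈ NF
    · exact ⟨0, hx⟩
    · exact key (idx x + 1) x hx (by omega)
  set m : M → ℕ := fun x => Nat.find (hreach x) with hm
  have hmN : ∀ x, step^[m x] x ∈ NF := fun x => Nat.find_spec (hreach x)
  have hmlt : ∀ x t, t < m x → step^[t] x ∉ NF := fun x t ht => Nat.find_min (hreach x) ht
  have hm0 : ∀ x, x ∈ NF → m x = 0 := by
    intro x hx
    have : m x ≤ 0 := Nat.find_le (by simpa using hx)
    omega
  have hm_pos : ∀ x, x ∉ NF → 0 < m x := by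
    intro x hx
    rcases Nat.eq_zero_or_pos (m x) with h | h
    · exfalso; have := hmN x; rw [h] at this; simp at this; exact hx this
    · exact h
  have hsucc : ∀ (x : M) (t : ℕ), step^[t+1] x = step (step^[t] x) :=
    fun x t => Function.iterate_succ_apply' step t x
  have hdec : ∀ x t, t + 1 < m x → idx (step^[t+1] x) < idx (step^[t] x) := by
    intro x t ht
    have h1 : step^[t] x ∉ NF := hmlt x t (by omega)
    have h2 : step^[t+1] x ∉ NF := hmlt x (t+1) ht
    rcases hdesc _ h1 with h | ⟨_, hlt⟩
    · rw [hsucc] at h2; exact absurd h h2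
    · rw [hsucc]; exact hlt
  have hanti : ∀ (x : M) (t s : ℕ), s < t → t < m x → idx (step^[t] x) < idx (step^[s] x) := by
    intro x t
    induction t with
    | zero => intro s hs _; omega
    | succ t ih =>
      intro s hst htm
      rcases Nat.lt_succ_iff_lt_or_eq.mp hst with h | h
      · exact lt_trans (hdec x t htm) (ih s h (by omega))
      · subst h; exact hdec x s htm
  have hmlek : ∀ x, m x ≤ k := by
    intro x
    by_cases hx : x ∈ NF
    · rw [hm0 x hx]; omega
    · have hb : ∀ t, t < m x → idx (step^[t] x) + t ≤ idx x := by
        intro t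
        induction t with
        | zero => intro _; simp
        | succ t ih =>
          intro ht
          have h1 := hdec x t ht
          have h2 := ih (by omega)
          omega
      by_contra hcon
      push_neg at hcon
      have h1 : idx x + 1 < m x := by have := hidxk x; omega
      have := hb (idx x + 1) h1
      omega
  set w : ℕ → ℝ := fun i => ρ (z i) (p i) with hw
  set I : M → Finset ℕ := fun x => (range (m x)).image (fun t => idx (step^[t] x)) with hI
  have hImem : ∀ x i, i ∈ I x ↔ ∃ t, t < m x ∧ idx (step^[t] x) = i := by
    intro x i; simp [hI]
  have hinjI : ∀ x, ∀ a ∈ range (m x), ∀ b ∈ range (m x),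
      idx (step^[a] x) = idx (step^[b] x) → a = b := by
    intro x a ha b hb hab
    rw [mem_range] at ha hb
    rcases lt_trichotomy a b with h | h | h
    · have := hanti x b a h hb; omega
    · exact h
    · have := hanti x a b h ha; omega
  have hIcard : ∀ x, (I x).card = m x := by
    intro x
    rw [hI]
    rw [Finset.card_image_of_injOn (fun a ha b hb => hinjI x a ha b hb), card_range]
  have hIk : ∀ x, ∀ i ∈ I x, i < k := by
    intro x i hi
    obtain ⟨t, _, rfl⟩ := (hImem x i).1 hi
    exact hidxk _
  have hIle : ∀ x, ∀ i ∈ I x, i ≤ idx x := by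
    intro x i hi
    obtain ⟨t, htm, rfl⟩ := (hImem x i).1 hi
    rcases Nat.eq_zero_or_pos t with h | h
    · subst h; simp
    · have := hanti x t 0 h htm
      simp only [Function.iterate_zero_apply] at this
      omega
  have hInot : ∀ x, ∀ i ∈ I x, x ∉ NF := by
    intro x i hi
    obtain ⟨t, htm, _⟩ := (hImem x i).1 hi
    have := hmlt x 0 (by omega)
    simpa using this
  have hchain_z : ∀ x t, t < m x → z (idx (step^[t] x)) = step^[t] x :=
    fun x t ht => hidx_z _ (hmlt x t ht)
  have hstep_p : ∀ x t, t < m x → step^[t+1] x = p (idx (step^[t] x)) := by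
    intro x t ht
    rw [hsucc, hstepNot _ (hmlt x t ht)]
  have hparent : ∀ x i, i ∈ I x → p i ∉ NF → idx (p i) ∈ I x ∧ idx (p i) < i := by
    intro x i hi hpN
    obtain ⟨t, htm, rfl⟩ := (hImem x i).1 hi
    have hps : step^[t+1] x = p (idx (step^[t] x)) := hstep_p x t htm
    have ht1 : t + 1 < m x := by
      rcases Nat.lt_or_ge (t+1) (m x) with h | h
      · exact h
      · exfalso
        have : t + 1 = m x := by omega
        rw [this] at hps
        exact hpN (hps ▸ hmN x)
    constructor
    · exact (hImem x _).2 ⟨t+1, ht1, by rw [hps]⟩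
    · have := hdec x t ht1
      rwa [hps] at this
  have htel : ∀ x n, n ≤ m x → ρ x (step^[n] x) ≤ ∑ t ∈ range n, w (idx (step^[t] x)) := by
    intro x n
    induction n with
    | zero => intro _; simp [hdiag]
    | succ n ih =>
      intro h
      have h1 := ih (by omega)
      have hzn : step^[n] x = z (idx (step^[n] x)) := (hchain_z x n (by omega)).symm
      have h2 : ρ (step^[n] x) (step^[n+1] x) = w (idx (step^[n] x)) := by
        rw [hstep_p x n (by omega)]
        conv_lhs => rw [hzn]
        rw [hidx_inv _ (hidxk _)]
      rw [Finset.sum_range_succ]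
      calc ρ x (step^[n+1] x) ≤ ρ x (step^[n] x) + ρ (step^[n] x) (step^[n+1] x) := htri _ _ _
        _ ≤ (∑ t ∈ range n, w (idx (step^[t] x))) + w (idx (step^[n] x)) := by
            rw [h2]; exact add_le_add_left h1 _
  have hsumI : ∀ x, ∑ i ∈ I x, w i = ∑ t ∈ range (m x), w (idx (step^[t] x)) := by
    intro x
    rw [hI]
    exact Finset.sum_image (fun a ha b hb => hinjI x a ha b hb)
  set r : M → M := fun x => step^[k] x with hr
  have hr_eq : ∀ x, r x = step^[m x] x := by
    intro x
    have hks : k = (k - m x) + m x := (Nat.sub_add_cancel (hmlek x)).symm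
    simp only [hr]
    rw [hks, Function.iterate_add_apply]
    exact hfix _ _ (hmN x)
  have hrN : ∀ x, r x ∈ NF := by intro x; rw [hr_eq]; exact hmN x
  have hrid : ∀ x, x ∈ NF → r x = x := by
    intro x hx; simp only [hr]; exact hfix k x hx
  have hrd : ∀ x, ρ x (r x) ≤ ∑ i ∈ I x, w i := by
    intro x
    rw [hr_eq, hsumI]
    exact htel x (m x) le_rfl
  have hrstep : ∀ (x : M) (t : ℕ), r (step^[t] x) = r x := by
    intro x t
    simp only [hr]
    rw [← Function.iterate_add_apply, add_comm, Function.iterate_add_apply]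
    exact hfix t _ (hrN x)
  -- the crux: bottleneck bound for edges on disjoint chains
  have haux : ∀ a b : M, (∀ i ∈ I a, i ∉ I b) → ∀ x, x ∈ I a →
      (∀ j ∈ I a ∪ I b, w j ≤ w x) → (∀ j ∈ I a ∪ I b, w j = w x → j ≤ x) →
      w x ≤ ρ a b := by
    intro a b hdisj x hxa hmax hlex
    have hxk : x < k := hIk a x hxa
    have haN : a ∉ NF := hInot a x hxa
    have hxle : x ≤ idx a := hIle a x hxa
    have hanotS : a ∉ NF ∧ ∀ j, j < x → z j ≠ a := by
      refine ⟨haN, fun j hj hzj => ?_⟩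
      have hj' : j < k := lt_trans hj hxk
      have : j = idx a := hzinj j hj' (idx a) (hidxk a) (by rw [hzj, hidx_z a haN])
      omega
    have hbS : b ∈ NF ∨ ∃ j, j < x ∧ z j = b := by
      by_cases hbN : b ∈ NF
      · exact Or.inl hbN
      · refine Or.inr ?_
        suffices hlt : idx b < x by exact ⟨idx b, hlt, hidx_z b hbN⟩
        by_contra hnlt
        have hmb : 0 < m b := hm_pos b hbN
        have hidxbI : idx b ∈ I b := (hImem b (idx b)).2 ⟨0, hmb, by simp⟩
        set T' := (I b).filter (fun i => x ≤ i) with hT'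
        have hT'ne : T'.Nonempty := ⟨idx b, Finset.mem_filter.2 ⟨hidxbI, by omega⟩⟩
        set y' := T'.min' hT'ne with hy'
        have hy'mem := T'.min'_mem hT'ne
        have hy'I : y' ∈ I b := (Finset.mem_filter.1 hy'mem).1
        have hy'ge : x ≤ y' := (Finset.mem_filter.1 hy'mem).2
        have hy'k : y' < k := hIk b y' hy'I
        have hzy'notS : z y' ∉ NF ∧ ∀ j, j < x → z j ≠ z y' := by
          refine ⟨hz1 y' hy'k, fun j hj hzj => ?_⟩
          have : j = y' := hzinj j (lt_trans hj hxk) y' hy'k hzj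
          omega
        have hpy'S : p y' ∈ NF ∨ ∃ j, j < x ∧ z j = p y' := by
          by_cases hpN : p y' ∈ NF
          · exact Or.inl hpN
          · refine Or.inr ?_
            obtain ⟨hpI, hplt⟩ := hparent b y' hy'I hpN
            refine ⟨idx (p y'), ?_, hidx_z _ hpN⟩
            by_contra hge
            have hmem' : idx (p y') ∈ T' := Finset.mem_filter.2 ⟨hpI, by omega⟩
            have := T'.min'_le _ hmem'
            omega
        have hwxy : w x ≤ w y' := hmin x hxk (z y') (p y') hzy'notS hpy'S
        have hy'U : y' ∈ I a ∪ I b := Finset.mem_union_right _ hy'I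
        have heq : w y' = w x := le_antisymm (hmax y' hy'U) hwxy
        have hy'lex := hlex y' hy'U heq
        have : y' = x := le_antisymm hy'lex hy'ge
        exact hdisj x hxa (this ▸ hy'I)
    exact hmin x hxk a b hanotS hbS
  have hedge : ∀ u v : M, (∀ i ∈ I u, i ∉ I v) → ∀ i ∈ I u ∪ I v, w i ≤ ρ u v := by
    intro u v hdisj i hi
    have hTne : (I u ∪ I v).Nonempty := ⟨i, hi⟩
    have hWne : ((I u ∪ I v).image w).Nonempty := hTne.image w
    set Wm := ((I u ∪ I v).image w).max' hWne with hWm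
    have hWmmem : Wm ∈ (I u ∪ I v).image w := Finset.max'_mem _ _
    obtain ⟨x₀, hx₀T, hx₀w⟩ := Finset.mem_image.1 hWmmem
    set F := (I u ∪ I v).filter (fun j => w j = Wm) with hF
    have hFne : F.Nonempty := ⟨x₀, Finset.mem_filter.2 ⟨hx₀T, hx₀w⟩⟩
    set x := F.max' hFne with hx
    have hxF := F.max'_mem hFne
    have hxT : x ∈ I u ∪ I v := (Finset.mem_filter.1 hxF).1
    have hwx : w x = Wm := (Finset.mem_filter.1 hxF).2
    have hmax : ∀ j ∈ I u ∪ I v, w j ≤ w x := by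
      intro j hj
      rw [hwx]
      exact Finset.le_max' _ _ (Finset.mem_image_of_mem w hj)
    have hlex : ∀ j ∈ I u ∪ I v, w j = w x → j ≤ x := by
      intro j hj hjw
      exact F.le_max' j (Finset.mem_filter.2 ⟨hj, by rw [hjw, hwx]⟩)
    have hiwx : w i ≤ w x := hmax i hi
    rcases Finset.mem_union.1 hxT with hxu | hxv
    · exact hiwx.trans (haux u v hdisj x hxu hmax hlex)
    · have hdisj' : ∀ i ∈ I v, i ∉ I u := fun j hj hju => hdisj j hju hj
      have hmax' : ∀ j ∈ I v ∪ I u, w j ≤ w x := by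
        intro j hj
        rcases Finset.mem_union.1 hj with h | h
        · exact hmax j (Finset.mem_union_right _ h)
        · exact hmax j (Finset.mem_union_left _ h)
      have hlex' : ∀ j ∈ I v ∪ I u, w j = w x → j ≤ x := by
        intro j hj
        rcases Finset.mem_union.1 hj with h | h
        · exact hlex j (Finset.mem_union_right _ h)
        · exact hlex j (Finset.mem_union_left _ h)
      have := haux v u hdisj' x hxv hmax' hlex'
      rw [hsym v u] at this
      exact hiwx.trans this
  refine ⟨r, fun x => (hmemNF _).1 (hrN x), fun x hx => hrid x ((hmemNF _).2 hx), ?_⟩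
  intro u v
  by_cases hshare : ∃ i, i ∈ I u ∧ i ∈ I v
  · obtain ⟨i, hiu, hiv⟩ := hshare
    obtain ⟨s, hs, hsi⟩ := (hImem u i).1 hiu
    obtain ⟨t, ht, hti⟩ := (hImem v i).1 hiv
    have h1 : step^[s] u = step^[t] v := by
      rw [← hchain_z u s hs, ← hchain_z v t ht, hsi, hti]
    have h2 : r u = r v := by rw [← hrstep u s, h1, hrstep v t]
    rw [h2, hdiag]
    have h3 := hnonneg u v
    have h4 : (0:ℝ) ≤ (k : ℝ) + 1 := by positivity
    exact mul_nonneg h4 h3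
  · push_neg at hshare
    have hcard : m u + m v ≤ k := by
      have hdisjF : Disjoint (I u) (I v) := Finset.disjoint_left.2 (fun {a} ha => hshare a ha)
      have h1 : (I u ∪ I v).card = m u + m v := by
        rw [Finset.card_union_of_disjoint hdisjF, hIcard, hIcard]
      have h2 : I u ∪ I v ⊆ range k := by
        intro i hi
        rcases Finset.mem_union.1 hi with h | h
        · exact mem_range.2 (hIk u i h)
        · exact mem_range.2 (hIk v i h)
      have h3 := Finset.card_le_card h2
      rw [h1, card_range] at h3
      exact h3
    have hedg := hedge u v hshare
    have hsu : ∑ i ∈ I u, w i ≤ (m u : ℝ) * ρ u v := by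
      calc ∑ i ∈ I u, w i ≤ (I u).card • ρ u v :=
            Finset.sum_le_card_nsmul _ _ _ (fun i hi => hedg i (Finset.mem_union_left _ hi))
        _ = (m u : ℝ) * ρ u v := by rw [hIcard, nsmul_eq_mul]
    have hsv : ∑ i ∈ I v, w i ≤ (m v : ℝ) * ρ u v := by
      calc ∑ i ∈ I v, w i ≤ (I v).card • ρ u v :=
            Finset.sum_le_card_nsmul _ _ _ (fun i hi => hedg i (Finset.mem_union_right _ hi))
        _ = (m v : ℝ) * ρ u v := by rw [hIcard, nsmul_eq_mul]
    have t1 : ρ (r u) u ≤ (m u : ℝ) * ρ u v := by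
      rw [hsym]
      exact (hrd u).trans hsu
    have t2 : ρ v (r v) ≤ (m v : ℝ) * ρ u v := (hrd v).trans hsv
    have hc : (m u : ℝ) + (m v : ℝ) ≤ (k : ℝ) := by exact_mod_cast hcard
    have h5 := hnonneg u v
    calc ρ (r u) (r v) ≤ ρ (r u) u + ρ u (r v) := htri _ _ _
      _ ≤ ρ (r u) u + (ρ u v + ρ v (r v)) := add_le_add_right (htri u v (r v)) _
      _ ≤ (m u : ℝ) * ρ u v + (ρ u v + (m v : ℝ) * ρ u v) :=
          add_le_add t1 (add_le_add_right t2 _)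
      _ ≤ ((k : ℝ) + 1) * ρ u v := by nlinarith

/-- Basso's theorem for `q`-metric spaces: in a finite
`q`-metric space `M`, any proper subset `N` with `|N| ≥ 2` is a
`(|M \ N| + 1)^{1/q}`-Lipschitz retract of `M`. -/
theorem stmt_10 (p q : ℝ) (hp0 : 0 < p) (hpq : p ≤ q) (hq1 : q ≤ 1)
    {M : Type*} [Fintype M] (d : M → M → ℝ)
    (hsym : ∀ u v, d u v = d v u) (hdiag : ∀ u, d u u = 0)
    (hpos : ∀ u v, u ≠ v → 0 < d u v)
    (htri : ∀ u v w, d u w ^ q ≤ d u v ^ q + d v w ^ q)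
    (N : Set M) (hNcard : 2 ≤ N.ncard) (hNne : N ≠ Set.univ) :
    ∃ r : M → M, (∀ x, r x ∈ N) ∧ (∀ x ∈ N, r x = x) ∧
      ∀ u v, d (r u) (r v) ≤ ((Nᶜ.ncard : ℝ) + 1) ^ (1 / q) * d u v := by
  have hq0 : 0 < q := lt_of_lt_of_le hp0 hpq
  have hq' : q ≠ 0 := ne_of_gt hq0
  have hdnn : ∀ u v, 0 ≤ d u v := by
    intro u v
    by_cases h : u = v
    · subst h; rw [hdiag]
    · exact le_of_lt (hpos u v h)
  have hNne' : N.Nonempty := Set.nonempty_of_ncard_ne_zero (by omega)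
  obtain ⟨r, hr1, hr2, hr3⟩ := basso_metric (fun u v => d u v ^ q)
    (fun u v => by show d u v ^ q = d v u ^ q; rw [hsym u v])
    (fun u => by show d u u ^ q = 0; rw [hdiag u]; exact Real.zero_rpow hq')
    (fun u v => Real.rpow_nonneg (hdnn u v) q)
    htri N hNne'
  refine ⟨r, hr1, hr2, ?_⟩
  intro u v
  have h := hr3 u v
  have h : d (r u) (r v) ^ q ≤ ((Nᶜ.ncard : ℝ) + 1) * d u v ^ q := h
  have hK : (0:ℝ) ≤ (Nᶜ.ncard : ℝ) + 1 := by positivity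
  calc d (r u) (r v) = (d (r u) (r v) ^ q) ^ (1/q) := by
        rw [← Real.rpow_mul (hdnn _ _), mul_one_div_cancel hq', Real.rpow_one]
    _ ≤ (((Nᶜ.ncard : ℝ) + 1) * d u v ^ q) ^ (1/q) :=
        Real.rpow_le_rpow (Real.rpow_nonneg (hdnn _ _) q) h (by positivity)
    _ = ((Nᶜ.ncard : ℝ) + 1) ^ (1/q) * (d u v ^ q) ^ (1/q) :=
        Real.mul_rpow hK (Real.rpow_nonneg (hdnn _ _) q)
    _ = ((Nᶜ.ncard : ℝ) + 1) ^ (1/q) * d u v := by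
        rw [← Real.rpow_mul (hdnn u v), mul_one_div_cancel hq', Real.rpow_one]
end

section
/- Let (M, d, 0) be a nontrivial finite pointed p-metric space with p ∈ (0,1], and suppose d(x, 0) = d(x, M \ {x}) for every x ∈ M \ {0}. Then for every a ∈ [0,∞)^{M\{0}} and every rooted spanning tree T on M with root 0, we have sum_{x ∈ M\{0}} ( d(e_x^T) · sum_{y ∈ V_x^T} a_y )^p ≥ sum_{x ∈ M\{0}} (d(x,0) a_x)^p, where e_x^T = {pred_T(x), x} and V_x^T is the vertex set of the subtree of T rooted at x. -/
open scoped Classical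

/- Each summand dominates its counterpart: the tree edge at `x` joins `x` to a point other than `x`,
so it is at least `d(x, 0)` by hypothesis, and the subtree mass at `x` contains `a_x`.
The tree `T` is given by its parent map `par`, and `V_x^T = {y | ∃ k, par^[k] y = x}`. -/

theorem Function.apply_ne_self_of_iterate_eq {α : Type*} {f : α → α} {x b : α} {k : ℕ}
    (hk : f^[k] x = b) (hx : x ≠ b) : f x ≠ x :=
  fun hfix => hx (Function.iterate_fixed hfix k ▸ hk)

theorem self_le_sum_filter_iterate_eq {M : Type*} [Fintype M] (f : M → M) (a : M → ℝ)
    (ha : ∀ y, 0 ≤ a y) (x : M) :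
    a x ≤ ∑ y ∈ Finset.univ.filter (fun y => ∃ k, f^[k] y = x), a y :=
  Finset.single_le_sum (fun y _ => ha y) (Finset.mem_filter.2 ⟨Finset.mem_univ x, 0, rfl⟩)

theorem stmt_11_general (p : ℝ) (hp0 : 0 < p)
    {M : Type*} [Fintype M] [DecidableEq M] (base : M)
    (d : M → M → ℝ)
    (hsym : ∀ u v, d u v = d v u)
    (hpos : ∀ u v, u ≠ v → 0 < d u v)
    (hnear : ∀ x, x ≠ base → ∀ y, y ≠ x → d x base ≤ d x y)
    (a : M → ℝ) (hann : ∀ x, 0 ≤ a x)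
    (par : M → M)
    (hreach : ∀ x, ∃ k, par^[k] x = base) :
    ∑ x ∈ Finset.univ.erase base,
        (d (par x) x * ∑ y ∈ Finset.univ.filter (fun y => ∃ k, par^[k] y = x), a y) ^ p
      ≥ ∑ x ∈ Finset.univ.erase base, (d x base * a x) ^ p := by
  refine Finset.sum_le_sum fun x hx => ?_
  have hxb : x ≠ base := Finset.ne_of_mem_erase hx
  obtain ⟨k, hk⟩ := hreach x
  have hedge : d x base ≤ d (par x) x :=
    hsym (par x) x ▸ hnear x hxb (par x) (Function.apply_ne_self_of_iterate_eq hk hxb)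
  have hmass := self_le_sum_filter_iterate_eq par a hann x
  have hd0 : 0 ≤ d x base := (hpos x base hxb).le
  exact Real.rpow_le_rpow (mul_nonneg hd0 (hann x))
    (mul_le_mul hedge hmass (hann x) (hd0.trans hedge)) hp0.le

/-- if in a nontrivial finite pointed `p`-metric space the base
point is a nearest point of every `x ≠ 0`, then for every nonnegative family
of coefficients and every rooted spanning tree `T` on `M` with root `0`
(encoded by its parent function `par`), the tree evaluation dominates
`∑ (d(x,0) a_x)^p`.  Here `V_x^T = {y | ∃ k, par^[k] y = x}` is the subtree
rooted at `x` and `d(e_x^T) = d(par x, x)`. -/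
theorem stmt_11 (p : ℝ) (hp0 : 0 < p) (hp1 : p ≤ 1)
    {M : Type*} [Fintype M] [DecidableEq M] [Nontrivial M] (base : M)
    (d : M → M → ℝ)
    (hsym : ∀ u v, d u v = d v u) (hdiag : ∀ u, d u u = 0)
    (hpos : ∀ u v, u ≠ v → 0 < d u v)
    (htri : ∀ u v w, d u w ^ p ≤ d u v ^ p + d v w ^ p)
    (hnear : ∀ x, x ≠ base → ∀ y, y ≠ x → d x base ≤ d x y)
    (a : M → ℝ) (hann : ∀ x, 0 ≤ a x) (habase : a base = 0)
    (par : M → M) (hpar0 : par base = base)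
    (hreach : ∀ x, ∃ k, par^[k] x = base) :
    ∑ x ∈ Finset.univ.erase base,
        (d (par x) x * ∑ y ∈ Finset.univ.filter (fun y => ∃ k, par^[k] y = x), a y) ^ p
      ≥ ∑ x ∈ Finset.univ.erase base, (d x base * a x) ^ p :=
  stmt_11_general p hp0 base d hsym hpos hnear a hann par hreach
end

section
/- Let 0 < p < 1 and let (M, d, 0) be a pointed p-metric space containing distinct points x, y ≠ 0 with d(x, y) < d(x, 0). Then there exists α > 0 such that ‖δ(x) + α δ(y)‖^p_{F_p({0,x,y})} < d(x,0)^p + α^p d(y,0)^p, where ‖a δ(x) + b δ(y)‖^p_{F_p({0,x,y})} is given by the three-term minimum formula min{|a|^p d(x,0)^p + |b|^p d(y,0)^p, |a+b|^p d(x,0)^p + |b|^p d(x,y)^p, |a+b|^p d(y,0)^p + |a|^p d(x,y)^p}. -/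
/-!
Only the third term of the minimum matters. Since `t ↦ t ^ p` is concave for `p < 1`, the
increment `(1 + α) ^ p - α ^ p` is at most `p α ^ (p - 1)`, which tends to `0` as `α → ∞`.
Taking `α` large enough that this increment is below `(d(x,0) ^ p - d(x,y) ^ p) / d(y,0) ^ p`
gives `(1 + α) ^ p d(y,0) ^ p + d(x,y) ^ p < d(x,0) ^ p + α ^ p d(y,0) ^ p`.
-/

open Filter Topology

namespace Real

lemma one_add_rpow_sub_rpow_le {p : ℝ} (hp0 : 0 ≤ p) (hp1 : p ≤ 1) {α : ℝ} (hα : 0 < α) :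
    (1 + α) ^ p - α ^ p ≤ p * α ^ (p - 1) := by
  have bernoulli : (1 + α⁻¹) ^ p ≤ 1 + p * α⁻¹ :=
    rpow_one_add_le_one_add_mul_self (by linarith [inv_pos.mpr hα]) hp0 hp1
  have hαp : 0 < α ^ p := rpow_pos_of_pos hα p
  calc (1 + α) ^ p - α ^ p = α ^ p * (1 + α⁻¹) ^ p - α ^ p := by
        rw [← mul_rpow hα.le (by positivity), mul_add, mul_inv_cancel₀ hα.ne', mul_one, add_comm]
    _ ≤ α ^ p * (1 + p * α⁻¹) - α ^ p := by gcongr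
    _ = p * α ^ (p - 1) := by rw [rpow_sub_one hα.ne']; ring

lemma tendsto_one_add_rpow_sub_rpow_atTop {p : ℝ} (hp0 : 0 ≤ p) (hp1 : p < 1) :
    Tendsto (fun α : ℝ => (1 + α) ^ p - α ^ p) atTop (𝓝 0) := by
  have upper : Tendsto (fun α : ℝ => p * α ^ (p - 1)) atTop (𝓝 0) := by
    simpa [neg_sub] using (tendsto_rpow_neg_atTop (sub_pos.mpr hp1)).const_mul p
  refine tendsto_of_tendsto_of_tendsto_of_le_of_le' tendsto_const_nhds upper ?_ ?_
  · filter_upwards [eventually_gt_atTop 0] with α hα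
    exact sub_nonneg.mpr (rpow_le_rpow hα.le (by linarith) hp0)
  · filter_upwards [eventually_gt_atTop 0] with α hα
    exact one_add_rpow_sub_rpow_le hp0 hp1.le hα

lemma exists_one_add_rpow_mul_add_lt {p a b c : ℝ} (hp0 : 0 ≤ p) (hp1 : p < 1) (hc : 0 < c)
    (hba : b < a) : ∃ α : ℝ, 0 < α ∧ (1 + α) ^ p * c + b < a + α ^ p * c := by
  have small : ∀ᶠ α : ℝ in atTop, (1 + α) ^ p - α ^ p < (a - b) / c :=
    (tendsto_one_add_rpow_sub_rpow_atTop hp0 hp1).eventually (gt_mem_nhds (by positivity))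
  obtain ⟨α, hα, hsmall⟩ := ((eventually_gt_atTop 0).and small).exists
  refine ⟨α, hα, ?_⟩
  have := (lt_div_iff₀ hc).mp hsmall
  linarith

end Real

theorem stmt_12_general (p : ℝ) (hp0 : 0 < p) (hp1 : p < 1)
    (dx0 dy0 dxy : ℝ) (hdy0 : 0 < dy0) (hdxy : 0 < dxy)
    (hlt : dxy < dx0) :
    ∃ α : ℝ, 0 < α ∧
      min (min (dx0 ^ p + α ^ p * dy0 ^ p) ((1 + α) ^ p * dx0 ^ p + α ^ p * dxy ^ p))
          ((1 + α) ^ p * dy0 ^ p + dxy ^ p)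
        < dx0 ^ p + α ^ p * dy0 ^ p := by
  obtain ⟨α, hα, hlt'⟩ := Real.exists_one_add_rpow_mul_add_lt hp0.le hp1
    (Real.rpow_pos_of_pos hdy0 p) (Real.rpow_lt_rpow hdxy.le hlt hp0)
  exact ⟨α, hα, (min_le_right _ _).trans_lt hlt'⟩

/-- if `d(x,y) < d(x,0)` in a pointed `p`-metric space with
`0 < p < 1`, there is `α > 0` for which the three-term minimum formula for
`‖δ(x) + α δ(y)‖^p` on `{0, x, y}` is strictly less than
`d(x,0)^p + α^p d(y,0)^p`.  Here `dx0 = d(x,0)`, `dy0 = d(y,0)`,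
`dxy = d(x,y)`. -/
theorem stmt_12 (p : ℝ) (hp0 : 0 < p) (hp1 : p < 1)
    (dx0 dy0 dxy : ℝ) (hdx0 : 0 < dx0) (hdy0 : 0 < dy0) (hdxy : 0 < dxy)
    (t1 : dx0 ^ p ≤ dy0 ^ p + dxy ^ p) (t2 : dy0 ^ p ≤ dx0 ^ p + dxy ^ p)
    (t3 : dxy ^ p ≤ dx0 ^ p + dy0 ^ p)
    (hlt : dxy < dx0) :
    ∃ α : ℝ, 0 < α ∧
      min (min (dx0 ^ p + α ^ p * dy0 ^ p) ((1 + α) ^ p * dx0 ^ p + α ^ p * dxy ^ p))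
          ((1 + α) ^ p * dy0 ^ p + dxy ^ p)
        < dx0 ^ p + α ^ p * dy0 ^ p :=
  stmt_12_general p hp0 hp1 dx0 dy0 dxy hdy0 hdxy hlt
end

section
/- Let p ∈ (0,1], let M be a finite set with a distinguished point 0, and suppose M = M₁ ∪ M₂ with M₁ ∩ M₂ = {x₀}, x₀ ≠ 0, 0 ∈ M₂, |M₁| ≥ 2. Let T be a rooted spanning tree on (M, 0) obtained by gluing a rooted tree T₁ on (M₁, x₀) and a rooted tree T₂ on (M₂, 0) at the vertex x₀ (i.e., the edge set of T is the disjoint union of those of T₁ and T₂). Given a p-metric d on M and a ∈ ℝ^{M\{0}}, define T(a)^p := sum_{x ∈ M\{0}} |c_T(x,a) d(e_x^T)|^p where c_T(x,a) := sum_{y ∈ V_x^T} a_y. Then T(a)^p = T₁(a₁)^p + T₂(a₂)^p, where a₁ := a restricted to M₁ \ {x₀} and a₂ agrees with a on M₂ \ {0, x₀} while a₂(x₀) := sum_{z ∈ M₁} a(z). -/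
/-!
Gluing `T₁` and `T₂` at `x₀` changes no parent pointer, so the two sides are sums of the same
terms once the subtree sums agree. For `x ∈ M₁ \ {x₀}` the subtree of `x` in `T` stays inside
`M₁`, because `M₂` is closed under `par`. For `x ∈ M₂` the subtree of `x` in `T` is its subtree in
`T₂` together with all of `M₁ \ {x₀}` when `x₀` lies below `x` (every point of `M₁` leaves `M₁`
through `x₀` on its way to the root), and without it otherwise; this is exactly what moving the
mass of `M₁` onto `x₀` in `a₂` accounts for.
-/

open scoped Classical

open Finset

section GluedTree

variable {M : Type*} {par : M → M}

theorem exists_iterate_eq_gate_of_exit {S : Set M} {x₀ x : M}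
    (hS : ∀ z ∈ S, z ≠ x₀ → par z ∈ S) (hx : x ∈ S → x = x₀) {k : ℕ} :
    ∀ {y : M}, y ∈ S → par^[k] y = x → (∃ j, par^[j] y = x₀) ∧ ∃ m, par^[m] x₀ = x := by
  induction k with
  | zero =>
    rintro y hy rfl
    obtain rfl := hx hy
    exact ⟨⟨0, rfl⟩, ⟨0, rfl⟩⟩
  | succ k ih =>
    intro y hy hk
    by_cases hyx₀ : y = x₀
    · subst hyx₀
      exact ⟨⟨0, rfl⟩, ⟨k + 1, hk⟩⟩
    · obtain ⟨⟨j, hj⟩, hm⟩ := ih (hS y hy hyx₀) hk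
      exact ⟨⟨j + 1, hj⟩, hm⟩

variable [DecidableEq M] {M₁ M₂ : Finset M} {x₀ : M}

theorem eq_of_mem_of_mem_of_inter_eq (hinter : M₁ ∩ M₂ = {x₀}) {x : M} (h₁ : x ∈ M₁)
    (h₂ : x ∈ M₂) : x = x₀ :=
  mem_singleton.1 (hinter ▸ mem_inter.2 ⟨h₁, h₂⟩)

theorem univ_eq_erase_union [Fintype M] (hunion : M₁ ∪ M₂ = univ) (hx₀ : x₀ ∈ M₂) :
    univ = M₁.erase x₀ ∪ M₂ := by
  rw [← hunion, erase_union_of_mem hx₀]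

theorem univ_erase_eq_union_erase [Fintype M] {base : M} (hunion : M₁ ∪ M₂ = univ)
    (hx₀ : x₀ ∈ M₂) (hbase₁ : base ∉ M₁) :
    univ.erase base = M₁.erase x₀ ∪ M₂.erase base := by
  rw [univ_eq_erase_union hunion hx₀, erase_union_distrib,
    erase_eq_of_notMem fun h => hbase₁ (mem_of_mem_erase h)]

theorem disjoint_erase_of_inter_eq (hinter : M₁ ∩ M₂ = {x₀}) (s : Finset M) (hs : s ⊆ M₂) :
    Disjoint (M₁.erase x₀) s :=
  disjoint_left.2 fun _ hz hzs =>
    (mem_erase.1 hz).1 (eq_of_mem_of_mem_of_inter_eq hinter (mem_erase.1 hz).2 (hs hzs))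

theorem filter_univ_reach_eq_filter [Fintype M] (hunion : M₁ ∪ M₂ = univ)
    (h₂ : Set.MapsTo par M₂ M₂) {x : M} (hx : x ∉ M₂) :
    univ.filter (fun y => ∃ k, par^[k] y = x) = M₁.filter (fun y => ∃ k, par^[k] y = x) := by
  ext y
  simp only [mem_filter, mem_univ, true_and]
  refine ⟨fun hyx => ⟨?_, hyx⟩, And.right⟩
  obtain ⟨k, hk⟩ := hyx
  rcases mem_union.1 (hunion ▸ mem_univ y) with hy | hy
  · exact hy
  · exact absurd (hk ▸ h₂.iterate k hy) hx

theorem reach_iff_gate_reach (hinter : M₁ ∩ M₂ = {x₀}) (h₁ : ∀ z ∈ M₁, z ≠ x₀ → par z ∈ M₁)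
    (hgate : ∀ y ∈ M₁, ∃ j, par^[j] y = x₀) {y x : M} (hy : y ∈ M₁) (hx : x ∈ M₂) :
    (∃ k, par^[k] y = x) ↔ ∃ m, par^[m] x₀ = x := by
  constructor
  · rintro ⟨k, hk⟩
    exact (exists_iterate_eq_gate_of_exit (S := ↑M₁) h₁
      (fun hx₁ => eq_of_mem_of_mem_of_inter_eq hinter hx₁ hx) hy hk).2
  · rintro ⟨m, hm⟩
    obtain ⟨j, hj⟩ := hgate y hy
    exact ⟨m + j, by rw [Function.iterate_add_apply, hj, hm]⟩

theorem sum_filter_univ_reach_eq_glued [Fintype M] {β : Type*} [AddCommMonoid β]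
    (hunion : M₁ ∪ M₂ = univ) (hinter : M₁ ∩ M₂ = {x₀})
    (h₁ : ∀ z ∈ M₁, z ≠ x₀ → par z ∈ M₁) (hgate : ∀ y ∈ M₁, ∃ j, par^[j] y = x₀)
    (a : M → β) {x : M} (hx : x ∈ M₂) :
    ∑ y ∈ univ.filter (fun y => ∃ k, par^[k] y = x), a y
      = ∑ y ∈ M₂.filter (fun y => ∃ k, par^[k] y = x),
          if y = x₀ then ∑ z ∈ M₁, a z else a y := by
  have hx₀ : x₀ ∈ M₁ ∩ M₂ := hinter ▸ mem_singleton_self x₀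
  have hM₁ : ∑ y ∈ (M₁.erase x₀).filter (fun y => ∃ k, par^[k] y = x), a y
      = if ∃ m, par^[m] x₀ = x then ∑ y ∈ M₁.erase x₀, a y else 0 := by
    rw [sum_filter, ite_sum_zero]
    exact sum_congr rfl fun y hy => by
      rw [reach_iff_gate_reach hinter h₁ hgate (mem_erase.1 hy).2 hx]
  have hglued : ∀ y, (if y = x₀ then ∑ z ∈ M₁, a z else a y)
      = a y + if y = x₀ then ∑ z ∈ M₁.erase x₀, a z else 0 := by
    intro y
    split_ifs with hy
    · rw [hy, add_sum_erase _ _ (mem_inter.1 hx₀).1]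
    · rw [add_zero]
  rw [univ_eq_erase_union hunion (mem_inter.1 hx₀).2, filter_union, sum_union (disjoint_filter_filter
      (disjoint_erase_of_inter_eq hinter M₂ subset_rfl)), hM₁, add_comm]
  simp only [hglued, sum_add_distrib, sum_ite_eq', mem_filter, (mem_inter.1 hx₀).2, true_and]

end GluedTree

/-- The tree `T` is encoded by its parent function `par` (so `T₁`, `T₂` are its restrictions to
`M₁`, `M₂`), subtrees are `V_x = {y | ∃ k, par^[k] y = x}`, and `c_T(x,a) = ∑_{y ∈ V_x} a_y`. -/
theorem stmt_16_general (p : ℝ)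
    {M : Type*} [Fintype M] [DecidableEq M] (base x₀ : M) (hx₀ : x₀ ≠ base)
    (d : M → M → ℝ)
    (M₁ M₂ : Finset M) (hunion : M₁ ∪ M₂ = Finset.univ)
    (hinter : M₁ ∩ M₂ = {x₀}) (hbase : base ∈ M₂)
    (par : M → M) (hpar0 : par base = base)
    (hreach : ∀ x, ∃ k, par^[k] x = base)
    (hclosed₁ : ∀ x ∈ M₁, x ≠ x₀ → par x ∈ M₁)
    (hclosed₂ : ∀ x ∈ M₂, x ≠ base → par x ∈ M₂)
    (a : M → ℝ)
    (a₂ : M → ℝ) (ha₂ : a₂ = fun y => if y = x₀ then ∑ z ∈ M₁, a z else a y) :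
    ∑ x ∈ Finset.univ.erase base,
        |(∑ y ∈ Finset.univ.filter (fun y => ∃ k, par^[k] y = x), a y) * d (par x) x| ^ p
      = (∑ x ∈ M₁.erase x₀,
          |(∑ y ∈ M₁.filter (fun y => ∃ k, par^[k] y = x), a y) * d (par x) x| ^ p)
        + ∑ x ∈ M₂.erase base,
            |(∑ y ∈ M₂.filter (fun y => ∃ k, par^[k] y = x), a₂ y) * d (par x) x| ^ p := by
  subst ha₂
  have hx₀₂ : x₀ ∈ M₂ := (mem_inter.1 (hinter ▸ mem_singleton_self x₀)).2
  have hbase₁ : base ∉ M₁ := fun h => hx₀ (eq_of_mem_of_mem_of_inter_eq hinter h hbase).symm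
  have h₂ : Set.MapsTo par M₂ M₂ := fun y hy => by
    by_cases hyb : y = base
    · rwa [hyb, hpar0]
    · exact hclosed₂ y hy hyb
  have hgate : ∀ y ∈ M₁, ∃ j, par^[j] y = x₀ := fun y hy =>
    have ⟨_, hk⟩ := hreach y
    (exists_iterate_eq_gate_of_exit (S := ↑M₁) hclosed₁ (absurd · hbase₁) hy hk).1
  rw [univ_erase_eq_union_erase hunion hx₀₂ hbase₁,
    sum_union (disjoint_erase_of_inter_eq hinter _ (erase_subset _ _))]
  congr 1
  · refine sum_congr rfl fun x hx => ?_
    rw [filter_univ_reach_eq_filter hunion h₂ fun hx₂ =>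
      (mem_erase.1 hx).1 (eq_of_mem_of_mem_of_inter_eq hinter (mem_erase.1 hx).2 hx₂)]
  · refine sum_congr rfl fun x hx => ?_
    rw [sum_filter_univ_reach_eq_glued hunion hinter hclosed₁ hgate a (mem_erase.1 hx).2]

/-- gluing lemma: if the rooted spanning tree `T` on `(M, 0)`
is obtained by gluing a rooted tree `T₁` on `(M₁, x₀)` and a rooted tree `T₂`
on `(M₂, 0)` at the vertex `x₀` (where `M = M₁ ∪ M₂`, `M₁ ∩ M₂ = {x₀}`), then
`T(a)^p = T₁(a₁)^p + T₂(a₂)^p`.  The tree `T` is encoded by its parent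
function `par` (so `T₁`, `T₂` are its restrictions to `M₁`, `M₂`), subtrees
are `V_x = {y | ∃ k, par^[k] y = x}`, and `c_T(x,a) = ∑_{y ∈ V_x} a_y`. -/
theorem stmt_16 (p : ℝ) (hp0 : 0 < p) (hp1 : p ≤ 1)
    {M : Type*} [Fintype M] [DecidableEq M] (base x₀ : M) (hx₀ : x₀ ≠ base)
    (d : M → M → ℝ)
    (hsym : ∀ u v, d u v = d v u) (hdiag : ∀ u, d u u = 0)
    (hpos : ∀ u v, u ≠ v → 0 < d u v)
    (htri : ∀ u v w, d u w ^ p ≤ d u v ^ p + d v w ^ p)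
    (M₁ M₂ : Finset M) (hunion : M₁ ∪ M₂ = Finset.univ)
    (hinter : M₁ ∩ M₂ = {x₀}) (hbase : base ∈ M₂) (hM₁ : 2 ≤ M₁.card)
    (par : M → M) (hpar0 : par base = base)
    (hreach : ∀ x, ∃ k, par^[k] x = base)
    (hclosed₁ : ∀ x ∈ M₁, x ≠ x₀ → par x ∈ M₁)
    (hclosed₂ : ∀ x ∈ M₂, x ≠ base → par x ∈ M₂)
    (a : M → ℝ) (habase : a base = 0)
    (a₂ : M → ℝ) (ha₂ : a₂ = fun y => if y = x₀ then ∑ z ∈ M₁, a z else a y) :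
    ∑ x ∈ Finset.univ.erase base,
        |(∑ y ∈ Finset.univ.filter (fun y => ∃ k, par^[k] y = x), a y) * d (par x) x| ^ p
      = (∑ x ∈ M₁.erase x₀,
          |(∑ y ∈ M₁.filter (fun y => ∃ k, par^[k] y = x), a y) * d (par x) x| ^ p)
        + ∑ x ∈ M₂.erase base,
            |(∑ y ∈ M₂.filter (fun y => ∃ k, par^[k] y = x), a₂ y) * d (par x) x| ^ p :=
  stmt_16_general p base x₀ hx₀ d M₁ M₂ hunion hinter hbase par hpar0 hreach hclosed₁ hclosed₂ a a₂
    ha₂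
end

section
/- For 0 < p < 1, q ∈ [p,1], and n ≥ 2, consider the star tree with center z, root 0, leaves x₁,...,xₙ, root-edge (0,z) and edges (z,xᵢ), all of weight 1, with the induced q-metric d (so d(xᵢ, 0) = 2^{1/q}, d(xᵢ, xⱼ) = 2^{1/q}, d(xᵢ, z) = d(z,0) = 1). With coefficients aᵢ = n^{-1/p}: (i) the tree-evaluation along the star satisfies (sum_i a_i)^p d(0,z)^p + sum_i a_i^p d(z,x_i)^p = n^{p-1} + 1, and (ii) sum_i a_i^p d(x_i, 0)^p = 2^{p/q}. Hence the ratio of (ii) to (i) is 2^{p/q}/(1 + n^{p-1}), which tends to 2^{p/q} as n → ∞. -/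
open Filter

/-- for the star tree with unit weights (center `z`, root `0`,
leaves `x₁, ..., xₙ`), induced `q`-metric distances `d(0,z) = d(z,xᵢ) = 1`,
`d(xᵢ,0) = 2^{1/q}`, and coefficients `aᵢ = n^{-1/p}`:
(i) the tree evaluation equals `n^{p-1} + 1`,
(ii) `∑ aᵢ^p d(xᵢ,0)^p = 2^{p/q}`, hence the ratio is
`2^{p/q}/(1 + n^{p-1})`, which tends to `2^{p/q}` as `n → ∞`. -/
theorem stmt_17 (p q : ℝ) (hp0 : 0 < p) (hp1 : p < 1) (hpq : p ≤ q) (hq1 : q ≤ 1)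
    {n : ℕ} (hn : 2 ≤ n)
    (a : Fin n → ℝ) (ha : ∀ i, a i = (n : ℝ) ^ (-(1 / p)))
    (d0z dzx dx0 : ℝ) (h0z : d0z = 1) (hzx : dzx = 1)
    (hx0 : dx0 = (2 : ℝ) ^ (1 / q)) :
    ((∑ i, a i) ^ p * d0z ^ p + ∑ i, a i ^ p * dzx ^ p = (n : ℝ) ^ (p - 1) + 1) ∧
    (∑ i, a i ^ p * dx0 ^ p = (2 : ℝ) ^ (p / q)) ∧
    ((∑ i, a i ^ p * dx0 ^ p) / ((∑ i, a i) ^ p * d0z ^ p + ∑ i, a i ^ p * dzx ^ p)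
        = (2 : ℝ) ^ (p / q) / (1 + (n : ℝ) ^ (p - 1))) ∧
    Tendsto (fun m : ℕ => (2 : ℝ) ^ (p / q) / (1 + (m : ℝ) ^ (p - 1))) atTop
      (nhds ((2 : ℝ) ^ (p / q))) := by
  have hnpos : (0 : ℝ) < (n : ℝ) := by
    have : 0 < n := lt_of_lt_of_le (by norm_num) hn
    exact_mod_cast this
  have hp0' := hp0.ne'
  have hap : ∀ i, a i ^ p = (n : ℝ)⁻¹ := by
    intro i
    rw [ha i, ← Real.rpow_mul hnpos.le]
    rw [show -(1/p) * p = -1 by field_simp, Real.rpow_neg_one]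
  have hsum : (∑ i, a i) = (n : ℝ) ^ (1 - 1/p) := by
    simp only [ha, Finset.sum_const, Finset.card_univ, Fintype.card_fin, nsmul_eq_mul]
    rw [show (1 : ℝ) - 1/p = 1 + (-(1/p)) by ring, Real.rpow_add hnpos, Real.rpow_one]
  have hsum_p : (∑ i, a i) ^ p = (n : ℝ) ^ (p - 1) := by
    rw [hsum, ← Real.rpow_mul hnpos.le]
    congr 1
    field_simp
  have h1 : ((∑ i, a i) ^ p * d0z ^ p + ∑ i, a i ^ p * dzx ^ p = (n : ℝ) ^ (p - 1) + 1) := by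
    simp only [hap, h0z, hzx, Real.one_rpow, mul_one, hsum_p, Finset.sum_const,
      Finset.card_univ, Fintype.card_fin, nsmul_eq_mul]
    rw [mul_inv_cancel₀ hnpos.ne']
  have h2 : (∑ i, a i ^ p * dx0 ^ p = (2 : ℝ) ^ (p / q)) := by
    simp only [hap, hx0, ← Real.rpow_mul (by norm_num : (0:ℝ) ≤ 2),
      Finset.sum_const, Finset.card_univ, Fintype.card_fin, nsmul_eq_mul]
    rw [show 1/q * p = p/q by ring, ← mul_assoc, mul_inv_cancel₀ hnpos.ne', one_mul]
  refine ⟨h1, h2, ?_, ?_⟩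
  · rw [h1, h2, add_comm ((n:ℝ) ^ (p-1)) 1]
  · have h0 : Tendsto (fun m : ℕ => (m : ℝ) ^ (p - 1)) atTop (nhds 0) := by
      have := (tendsto_rpow_neg_atTop (by linarith : 0 < 1 - p)).comp
        tendsto_natCast_atTop_atTop (α := ℕ)
      simpa [neg_sub, Function.comp_def] using this
    have : Tendsto (fun m : ℕ => (2 : ℝ) ^ (p / q) / (1 + (m : ℝ) ^ (p - 1))) atTop
        (nhds ((2:ℝ) ^ (p/q) / (1 + 0))) :=
      Tendsto.div tendsto_const_nhds (tendsto_const_nhds.add h0) (by norm_num)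
    simpa using this
end
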